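/- arXiv:2001.01078 — 8 statements merged into one kernel-verified Lean document; each statement's English description precedes it below -/
import Mathlib

section
/- For 0 < p < 1 and t ≥ 0, the binomial tail satisfies Σ_{i ≥ (p+t)n} C(n,i) p^i (1-p)^{n-i} ≤ e^{-2t²n}. -/
/-!
Chernoff's method: on the event `i ≥ a` the weight `exp (L * (i - a))` is at least `1` for
`L ≥ 0`, so the tail is bounded by `exp (-L a)` times the moment generating function
`(p e^L + 1 - p)^n` of the binomial law. Hoeffding's lemma for a Bernoulli variable bounds each
factor by `exp (p L + L² / 8)`, and the choice `L = 4t` minimises the resulting exponent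
`n (L² / 8 - L t)`, giving `-2 t² n`.
-/

open Real Finset MeasureTheory ProbabilityTheory

lemma bernoulli_mul_exp_add_le {p : ℝ} (hp0 : 0 ≤ p) (hp1 : p ≤ 1) (L : ℝ) :
    p * exp L + (1 - p) ≤ exp (p * L + L ^ 2 / 8) := by
  set μ := bernoulliMeasure true false ⟨p, hp0, hp1⟩
  set X : Bool → ℝ := fun b => cond b 1 0
  have hmean : μ[X] = p := by simp [μ, X, integral_bernoulliMeasure]
  have hmgf : mgf (fun b => X b - μ[X]) μ L = exp (-(p * L)) * (p * exp L + (1 - p)) := by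
    rw [hmean, mgf, integral_bernoulliMeasure]
    simp only [X, cond_true, cond_false, smul_eq_mul, zero_sub, mul_sub, mul_one, mul_neg,
      exp_sub, exp_neg]
    rw [mul_comm L p]
    ring
  have hX : ∀ b, X b ∈ Set.Icc (0 : ℝ) 1 := by
    intro b
    cases b <;> simp [X]
  have hhoeffding :=
    (hasSubgaussianMGF_of_mem_Icc Measurable.of_discrete.aemeasurable (ae_of_all μ hX)).mgf_le L
  rw [hmgf] at hhoeffding
  calc p * exp L + (1 - p) = exp (p * L) * (exp (-(p * L)) * (p * exp L + (1 - p))) := by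
        rw [← mul_assoc, ← exp_add, add_neg_cancel, exp_zero, one_mul]
    _ ≤ exp (p * L) * exp (L ^ 2 / 8) := by
        gcongr
        refine hhoeffding.trans_eq (congrArg exp ?_)
        norm_num
        ring
    _ = exp (p * L + L ^ 2 / 8) := (exp_add _ _).symm

lemma sum_filter_le_sum_exp_mul {ι : Type*} (s : Finset ι) {f x : ι → ℝ} (hf : ∀ i ∈ s, 0 ≤ f i)
    {L : ℝ} (hL : 0 ≤ L) (a : ℝ) :
    ∑ i ∈ s with a ≤ x i, f i ≤ ∑ i ∈ s, exp (L * (x i - a)) * f i := by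
  calc ∑ i ∈ s with a ≤ x i, f i
      ≤ ∑ i ∈ s with a ≤ x i, exp (L * (x i - a)) * f i := by
        refine sum_le_sum fun i hi => ?_
        obtain ⟨hs, hxi⟩ := mem_filter.mp hi
        exact le_mul_of_one_le_left (hf i hs) (one_le_exp (by nlinarith))
    _ ≤ ∑ i ∈ s, exp (L * (x i - a)) * f i :=
        sum_le_sum_of_subset_of_nonneg (filter_subset _ _)
          fun i hs _ => mul_nonneg (exp_pos _).le (hf i hs)

lemma sum_exp_mul_choose_mul_pow_mul_pow (n : ℕ) (p q L : ℝ) :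
    ∑ i ∈ range (n + 1), exp (L * i) * (n.choose i * p ^ i * q ^ (n - i)) =
      (p * exp L + q) ^ n := by
  rw [add_pow]
  refine sum_congr rfl fun i _ => ?_
  rw [mul_pow, ← exp_nat_mul, mul_comm (i : ℝ) L]
  ring

lemma binomial_tail_le_exp {p : ℝ} (hp0 : 0 ≤ p) (hp1 : p ≤ 1) (n : ℕ) {L : ℝ} (hL : 0 ≤ L)
    (a : ℝ) :
    ∑ i ∈ (range (n + 1)).filter (fun i : ℕ => a ≤ (i : ℝ)),
        (n.choose i : ℝ) * p ^ i * (1 - p) ^ (n - i) ≤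
      exp (n * (p * L + L ^ 2 / 8) - L * a) := by
  have hterm : ∀ i ∈ range (n + 1), 0 ≤ (n.choose i : ℝ) * p ^ i * (1 - p) ^ (n - i) :=
    fun i _ => by have := sub_nonneg.mpr hp1; positivity
  calc _ ≤ ∑ i ∈ range (n + 1), exp (L * (i - a)) * (n.choose i * p ^ i * (1 - p) ^ (n - i)) :=
        sum_filter_le_sum_exp_mul _ hterm hL a
    _ = exp (-(L * a)) * (p * exp L + (1 - p)) ^ n := by
        rw [← sum_exp_mul_choose_mul_pow_mul_pow, mul_sum]
        refine sum_congr rfl fun i _ => ?_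
        rw [mul_sub, exp_sub, exp_neg]
        ring
    _ ≤ exp (-(L * a)) * exp (p * L + L ^ 2 / 8) ^ n := by
        gcongr
        exact bernoulli_mul_exp_add_le hp0 hp1 L
    _ = exp (n * (p * L + L ^ 2 / 8) - L * a) := by
        rw [← exp_nat_mul, ← exp_add]
        congr 1
        ring

/-- Hoeffding/Chernoff bound for the upper tail of a Binomial(n,p) distribution. -/
theorem stmt_2 (n : ℕ) (p t : ℝ) (hp0 : 0 < p) (hp1 : p < 1) (ht : 0 ≤ t) :
    ∑ i ∈ (Finset.range (n + 1)).filter (fun i : ℕ => (p + t) * (n : ℝ) ≤ (i : ℝ)),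
        (n.choose i : ℝ) * p ^ i * (1 - p) ^ (n - i) ≤ Real.exp (-2 * t ^ 2 * n) := by
  calc _ ≤ exp (n * (p * (4 * t) + (4 * t) ^ 2 / 8) - 4 * t * ((p + t) * n)) :=
        binomial_tail_le_exp hp0.le hp1.le n (by positivity) _
    _ = exp (-2 * t ^ 2 * n) := by
        congr 1
        ring
end

section
/- Fix 0 < r < 1, a 0-1 vector x* ∈ {0,1}^n with n ≥ 1, and positive integers a_1,...,a_{n-1}. The number of positive integers a_n such that Σ_{j=1}^n a_j x*_j = ⌊r Σ_{j=1}^n a_j⌋ is at most ⌈max{1/r, 1/(1-r)}⌉. -/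
/-- The number of positive integers `m` (the last coefficient `aₙ`) making the subset sum
equation `∑ aⱼ x*ⱼ = ⌊r ∑ aⱼ⌋` hold is at most `⌈max (1/r) (1/(1-r))⌉`. -/
theorem stmt_4 (n : ℕ) (r : ℝ) (hr0 : 0 < r) (hr1 : r < 1)
    (a : Fin n → ℕ) (ha : ∀ j, 0 < a j)
    (x : Fin (n + 1) → ℝ) (hx : ∀ j, x j = 0 ∨ x j = 1) :
    Set.ncard {m : ℕ | 0 < m ∧
        (∑ j : Fin n, (a j : ℝ) * x j.castSucc) + (m : ℝ) * x (Fin.last n)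
          = (⌊r * ((∑ j : Fin n, (a j : ℝ)) + (m : ℝ))⌋ : ℝ)}
      ≤ ⌈max (1 / r) (1 / (1 - r))⌉₊ := by
  set S := ∑ j : Fin n, (a j : ℝ) * x j.castSucc with hS
  set T := ∑ j : Fin n, (a j : ℝ) with hT
  set L := max (1 / r) (1 / (1 - r)) with hL
  set K := {m : ℕ | 0 < m ∧ S + (m : ℝ) * x (Fin.last n) = (⌊r * (T + (m : ℝ))⌋ : ℝ)}
    with hK
  have hr1' : 0 < 1 - r := by linarith
  have key : ∀ m ∈ K, ∀ m' ∈ K, (m' : ℝ) - m < L := by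
    intro m hm m' hm'
    obtain ⟨hm0, hmeq⟩ := hm
    obtain ⟨hm0', hmeq'⟩ := hm'
    rcases hx (Fin.last n) with h0 | h1
    · rw [h0, mul_zero, add_zero] at hmeq hmeq'
      have hA : (⌊r * (T + (m : ℝ))⌋ : ℝ) ≤ r * (T + m) := Int.floor_le _
      have hB : r * (T + (m' : ℝ)) < ⌊r * (T + (m' : ℝ))⌋ + 1 := Int.lt_floor_add_one _
      rw [← hmeq] at hA
      rw [← hmeq'] at hB
      have hlt : (m' : ℝ) - m < 1 / r := by
        rw [lt_div_iff₀ hr0]; nlinarith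
      exact lt_of_lt_of_le hlt (le_max_left _ _)
    · rw [h1, mul_one] at hmeq hmeq'
      have hA : (⌊r * (T + (m' : ℝ))⌋ : ℝ) ≤ r * (T + m') := Int.floor_le _
      have hB : r * (T + (m : ℝ)) < ⌊r * (T + (m : ℝ))⌋ + 1 := Int.lt_floor_add_one _
      rw [← hmeq'] at hA
      rw [← hmeq] at hB
      have hlt : (m' : ℝ) - m < 1 / (1 - r) := by
        rw [lt_div_iff₀ hr1']; nlinarith
      exact lt_of_lt_of_le hlt (le_max_right _ _)
  rcases Set.eq_empty_or_nonempty K with hE | hE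
  · rw [hE, Set.ncard_empty]; exact Nat.zero_le _
  · set m0 := sInf K with hm0
    have hm0K : m0 ∈ K := Nat.sInf_mem hE
    have hsub : K ⊆ Set.Ico m0 (m0 + ⌈L⌉₊) := by
      intro m hm
      refine ⟨Nat.sInf_le hm, ?_⟩
      have h1 : (m : ℝ) - m0 < L := key m0 hm0K m hm
      have h2 : L ≤ (⌈L⌉₊ : ℝ) := Nat.le_ceil _
      have : (m : ℝ) < (m0 : ℝ) + (⌈L⌉₊ : ℝ) := by linarith
      exact_mod_cast (by push_cast at this ⊢; linarith : (m : ℝ) < ((m0 + ⌈L⌉₊ : ℕ) : ℝ))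
    calc K.ncard ≤ (Set.Ico m0 (m0 + ⌈L⌉₊)).ncard :=
          Set.ncard_le_ncard hsub (Set.finite_Ico _ _)
      _ = ⌈L⌉₊ := by
          rw [← Finset.coe_Ico, Set.ncard_coe_finset, Nat.card_Ico]
          omega
end

section
/- Fix 0 < r < 1 and a 0-1 vector x* ∈ {0,1}^n. The number of vectors (a_1,...,a_n) ∈ {1,...,M}^n satisfying Σ_{j=1}^n a_j x*_j = ⌊r Σ_{j=1}^n a_j⌋ is at most k(r)·M^{n-1}, where k(r) = ⌈max{1/r, 1/(1-r)}⌉. -/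
/-!
Fix every coordinate of `a` except `a₀ = t`. The equation `∑ aⱼ xⱼ = ⌊r ∑ aⱼ⌋` then says that
the affine function `(r - x₀) t + c` takes values in `[0, 1)`, so `t` ranges over a half-open
interval of length `1 / |r - x₀|`, which contains at most `⌈1 / |r - x₀|⌉` integers; and
`|r - x₀|` is `r` or `1 - r`. Summing over the `M^(n-1)` choices of the other coordinates
gives the bound.
-/

open Finset

namespace Int

theorem card_le_natCeil_of_sub_lt {S : Finset ℤ} {L : ℝ}
    (h : ∀ a ∈ S, ∀ b ∈ S, ((b - a : ℤ) : ℝ) < L) : #S ≤ ⌈L⌉₊ := by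
  rcases S.eq_empty_or_nonempty with rfl | hS
  · simp
  set m := S.min' hS
  calc #S ≤ #(Ico m (m + ⌈L⌉₊)) := by
        refine card_le_card fun b hb => mem_Ico.2 ⟨S.min'_le b hb, ?_⟩
        have hlt : ((b - m : ℤ) : ℝ) < ((⌈L⌉₊ : ℤ) : ℝ) := by
          exact_mod_cast (h m (S.min'_mem hS) b hb).trans_le (Nat.le_ceil L)
        have := Int.cast_lt.1 hlt
        omega
    _ = ⌈L⌉₊ := by simp

theorem card_le_natCeil_inv_abs_of_affine_mem_Ico {S : Finset ℤ} {s c : ℝ} (hs : s ≠ 0)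
    (h : ∀ t ∈ S, s * t + c ∈ Set.Ico (0 : ℝ) 1) : #S ≤ ⌈|s|⁻¹⌉₊ := by
  refine card_le_natCeil_of_sub_lt fun a ha b hb => ?_
  obtain ⟨ha0, ha1⟩ := h a ha
  obtain ⟨hb0, hb1⟩ := h b hb
  rw [← one_div, lt_div_iff₀' (abs_pos.2 hs)]
  calc |s| * ((b - a : ℤ) : ℝ) ≤ |s| * |((b - a : ℤ) : ℝ)| := by
        gcongr
        exact le_abs_self _
    _ = |(s * b + c) - (s * a + c)| := by rw [← abs_mul]; push_cast; ring_nf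
    _ < 1 := abs_sub_lt_of_nonneg_of_lt hb0 hb1 ha0 ha1

end Int

noncomputable def floorEqSolutions (n M : ℕ) (r : ℝ) (x : Fin n → ℝ) : Finset (Fin n → ℕ) :=
  (Fintype.piFinset fun _ => Icc 1 M).filter
    fun a => ∑ j, (a j : ℝ) * x j = ⌊r * ∑ j, (a j : ℝ)⌋

theorem coe_floorEqSolutions (n M : ℕ) (r : ℝ) (x : Fin n → ℝ) :
    (floorEqSolutions n M r x : Set (Fin n → ℕ)) =
      {a | (∀ j, 1 ≤ a j ∧ a j ≤ M) ∧ ∑ j, (a j : ℝ) * x j = ⌊r * ∑ j, (a j : ℝ)⌋} := by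
  ext a
  simp [floorEqSolutions, Fintype.mem_piFinset]

section Fibers

variable {m M : ℕ} {r : ℝ} {x : Fin (m + 1) → ℝ}

theorem card_filter_tail_eq_floorEqSolutions_le (hr : r ≠ x 0) (b : Fin m → ℕ) :
    #((floorEqSolutions (m + 1) M r x).filter (Fin.tail · = b)) ≤ ⌈|r - x 0|⁻¹⌉₊ := by
  set F := (floorEqSolutions (m + 1) M r x).filter (Fin.tail · = b)
  have hinj : Set.InjOn (fun a : Fin (m + 1) → ℕ => (a 0 : ℤ)) F := by
    intro a ha a' ha' h
    rw [← Fin.cons_self_tail a, ← Fin.cons_self_tail a', (mem_filter.1 ha).2,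
      (mem_filter.1 ha').2, Nat.cast_inj.1 h]
  rw [← card_image_of_injOn hinj]
  refine Int.card_le_natCeil_inv_abs_of_affine_mem_Ico (sub_ne_zero.2 hr)
    (c := r * ∑ i, (b i : ℝ) - ∑ i, (b i : ℝ) * x i.succ) ?_
  simp only [mem_image]
  rintro _ ⟨a, ha, rfl⟩
  obtain ⟨hsol, rfl⟩ := mem_filter.1 ha
  have heq := (mem_filter.1 hsol).2
  rw [Fin.sum_univ_succ, Fin.sum_univ_succ] at heq
  have hle := Int.floor_le (r * ((a 0 : ℝ) + ∑ i : Fin m, (a i.succ : ℝ)))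
  have hlt := Int.lt_floor_add_one (r * ((a 0 : ℝ) + ∑ i : Fin m, (a i.succ : ℝ)))
  rw [← heq, mul_add] at hle hlt
  simp only [Fin.tail, Set.mem_Ico, Int.cast_natCast]
  constructor <;> linarith

theorem card_floorEqSolutions_le (hr : r ≠ x 0) :
    #(floorEqSolutions (m + 1) M r x) ≤ ⌈|r - x 0|⁻¹⌉₊ * M ^ m := by
  have hmaps : ∀ a ∈ floorEqSolutions (m + 1) M r x,
      Fin.tail a ∈ Fintype.piFinset fun _ : Fin m => Icc 1 M := fun a ha =>
    Fintype.mem_piFinset.2 fun i => Fintype.mem_piFinset.1 (mem_filter.1 ha).1 i.succ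
  calc #(floorEqSolutions (m + 1) M r x)
        ≤ ⌈|r - x 0|⁻¹⌉₊ * #(Fintype.piFinset fun _ : Fin m => Icc 1 M) :=
          card_le_mul_card_image_of_maps_to hmaps _
            fun b _ => card_filter_tail_eq_floorEqSolutions_le hr b
    _ = ⌈|r - x 0|⁻¹⌉₊ * M ^ m := by simp

end Fibers

theorem stmt_5_general (n M : ℕ) (hn : 1 ≤ n) (r : ℝ) (hr0 : 0 < r) (hr1 : r < 1)
    (x : Fin n → ℝ) (hx : ∀ j, x j = 0 ∨ x j = 1) :
    Set.ncard {a : Fin n → ℕ | (∀ j, 1 ≤ a j ∧ a j ≤ M) ∧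
        (∑ j, (a j : ℝ) * x j) = (⌊r * ∑ j, (a j : ℝ)⌋ : ℝ)}
      ≤ ⌈max (1 / r) (1 / (1 - r))⌉₊ * M ^ (n - 1) := by
  obtain ⟨m, rfl⟩ := Nat.exists_eq_add_of_le' hn
  rw [← coe_floorEqSolutions, Set.ncard_coe_finset, Nat.add_sub_cancel]
  have hslope : r ≠ x 0 ∧ |r - x 0|⁻¹ ≤ max (1 / r) (1 / (1 - r)) := by
    rcases hx 0 with h | h <;> rw [h]
    · exact ⟨hr0.ne', by simp [abs_of_pos hr0]⟩
    · exact ⟨hr1.ne, by simp [abs_of_neg (sub_neg.2 hr1)]⟩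
  calc _ ≤ ⌈|r - x 0|⁻¹⌉₊ * M ^ m := card_floorEqSolutions_le hslope.1
    _ ≤ _ := by gcongr; exact hslope.2

/-- For a fixed 0-1 vector `x*`, the number of coefficient vectors `a ∈ {1,…,M}ⁿ` with
`∑ aⱼ x*ⱼ = ⌊r ∑ aⱼ⌋` is at most `⌈max (1/r) (1/(1-r))⌉ · M^(n-1)`. -/
theorem stmt_5 (n M : ℕ) (hn : 1 ≤ n) (hM : 1 ≤ M) (r : ℝ) (hr0 : 0 < r) (hr1 : r < 1)
    (x : Fin n → ℝ) (hx : ∀ j, x j = 0 ∨ x j = 1) :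
    Set.ncard {a : Fin n → ℕ | (∀ j, 1 ≤ a j ∧ a j ≤ M) ∧
        (∑ j, (a j : ℝ) * x j) = (⌊r * ∑ j, (a j : ℝ)⌋ : ℝ)}
      ≤ ⌈max (1 / r) (1 / (1 - r))⌉₊ * M ^ (n - 1) :=
  stmt_5_general n M hn r hr0 hr1 x hx
end

section
/- Fix 0 < r < 1. The number of vectors (a_1,...,a_n) ∈ {1,...,M}^n for which there exists some x ∈ {0,1}^n with Σ_{j=1}^n a_j x_j = ⌊r Σ_{j=1}^n a_j⌋ is at most k(r)·2^n·M^{n-1}, where k(r) = ⌈max{1/r, 1/(1-r)}⌉. -/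
open Finset


/-- The number of coefficient vectors `a ∈ {1,…,M}ⁿ` for which some 0-1 vector `x`
satisfies `∑ aⱼ xⱼ = ⌊r ∑ aⱼ⌋` is at most `⌈max (1/r) (1/(1-r))⌉ · 2ⁿ · M^(n-1)`. -/
theorem stmt_6 (n M : ℕ) (hn : 1 ≤ n) (hM : 1 ≤ M) (r : ℝ) (hr0 : 0 < r) (hr1 : r < 1) :
    Set.ncard {a : Fin n → ℕ | (∀ j, 1 ≤ a j ∧ a j ≤ M) ∧
        ∃ x : Fin n → ℝ, (∀ j, x j = 0 ∨ x j = 1) ∧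
          (∑ j, (a j : ℝ) * x j) = (⌊r * ∑ j, (a j : ℝ)⌋ : ℝ)}
      ≤ ⌈max (1 / r) (1 / (1 - r))⌉₊ * 2 ^ n * M ^ (n - 1) := by
  classical
  have h1r : (0:ℝ) < 1 - r := by linarith
  set k := ⌈max (1 / r) (1 / (1 - r))⌉₊ with hkdef
  have hk1 : 1 / (1 - r) ≤ (k : ℝ) :=
    le_trans (le_max_right _ _) (Nat.le_ceil _)
  have hk2 : 1 / r ≤ (k : ℝ) :=
    le_trans (le_max_left _ _) (Nat.le_ceil _)
  -- the predicate
  set P : (Fin n → ℕ) → Prop := fun a => ∃ x : Fin n → ℝ, (∀ j, x j = 0 ∨ x j = 1) ∧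
      (∑ j, (a j : ℝ) * x j) = (⌊r * ∑ j, (a j : ℝ)⌋ : ℝ) with hPdef
  set A : Finset (Fin n → ℕ) :=
    (Fintype.piFinset fun _ : Fin n => Finset.Icc 1 M).filter P with hAdef
  have hset : {a : Fin n → ℕ | (∀ j, 1 ≤ a j ∧ a j ≤ M) ∧ P a} = ↑A := by
    ext a
    simp [hAdef, Fintype.mem_piFinset, Finset.mem_Icc, and_comm]
  rw [show {a : Fin n → ℕ | (∀ j, 1 ≤ a j ∧ a j ≤ M) ∧
        ∃ x : Fin n → ℝ, (∀ j, x j = 0 ∨ x j = 1) ∧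
          (∑ j, (a j : ℝ) * x j) = (⌊r * ∑ j, (a j : ℝ)⌋ : ℝ)}
      = ↑A from hset, Set.ncard_coe_finset]
  -- auxiliary functions
  set j0 : (Fin n → Bool) → Fin n := fun X => if h : ∃ j, X j = true then h.choose else ⟨0, hn⟩
    with hj0def
  set Xof : (a : Fin n → ℕ) → P a → (Fin n → Bool) :=
    fun a h j => if h.choose j = 1 then true else false with hXdef
  set resF : (Fin n → ℕ) → (Fin n → Bool) → ℕ := fun a X =>
    if ∃ j, X j = true then
      (((∑ j ∈ univ.filter (fun j => X j = true), a j : ℕ) : ℤ) -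
        ⌊(r * ((∑ j ∈ univ.filter (fun j => ¬ X j = true), a j : ℕ) : ℝ) - 1) / (1 - r)⌋
        - 1).toNat
    else a (j0 X) - 1 with hresdef
  set F : (Fin n → ℕ) → Σ _ : Fin n → Bool, ℕ × (Fin n → ℕ) := fun a =>
    if h : P a then
      ⟨Xof a h, resF a (Xof a h), fun j => if j = j0 (Xof a h) then 1 else a j⟩
    else ⟨fun _ => false, 0, a⟩ with hFdef
  set B : Finset (Σ _ : Fin n → Bool, ℕ × (Fin n → ℕ)) :=
    univ.sigma (fun X => (range k) ×ˢ Fintype.piFinset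
      (fun j => if j = j0 X then ({1} : Finset ℕ) else Finset.Icc 1 M)) with hBdef
  -- the key structural lemma about F on P
  have main : ∀ a, ∀ h : P a,
      F a = ⟨Xof a h, resF a (Xof a h), fun j => if j = j0 (Xof a h) then 1 else a j⟩ ∧
      ((∑ j ∈ univ.filter (fun j => Xof a h j = true), a j : ℕ) : ℝ) =
        (⌊r * (((∑ j ∈ univ.filter (fun j => Xof a h j = true), a j : ℕ) : ℝ) +
          ((∑ j ∈ univ.filter (fun j => ¬ Xof a h j = true), a j : ℕ) : ℝ))⌋ : ℝ) := by
    intro a h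
    constructor
    · simp only [hFdef]; rw [dif_pos h]
    · obtain ⟨h01, heq⟩ := h.choose_spec
      have hXiff : ∀ j, (Xof a h j = true) ↔ h.choose j = 1 := by
        intro j; by_cases hj : h.choose j = 1 <;> simp [hXdef, hj]
      have hL : ∑ j, (a j : ℝ) * h.choose j
          = ∑ j ∈ univ.filter (fun j => Xof a h j = true), (a j : ℝ) := by
        rw [Finset.sum_filter]
        refine Finset.sum_congr rfl fun j _ => ?_
        rcases h01 j with h0 | h1
        · have : ¬ (Xof a h j = true) := by rw [hXiff]; rw [h0]; norm_num
          simp [h0, this]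
        · have : Xof a h j = true := by rw [hXiff]; exact h1
          simp [h1, this]
      have hR : ∑ j, (a j : ℝ)
          = ∑ j ∈ univ.filter (fun j => Xof a h j = true), (a j : ℝ)
            + ∑ j ∈ univ.filter (fun j => ¬ Xof a h j = true), (a j : ℝ) :=
        (Finset.sum_filter_add_sum_filter_not univ _ _).symm
      push_cast
      rw [← hR, ← hL]
      exact heq
  -- bounds coming from the floor equation
  have bounds : ∀ s t : ℕ, ((s:ℝ) = (⌊r * ((s:ℝ) + (t:ℝ))⌋ : ℝ)) →
      (r * t - 1) / (1 - r) < (s:ℝ) ∧ (s:ℝ) ≤ r * t / (1 - r) := by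
    intro s t hst
    have hfl := Int.floor_le (r * ((s:ℝ)+t))
    have hfu := Int.lt_floor_add_one (r * ((s:ℝ)+t))
    rw [← hst] at hfl hfu
    constructor
    · rw [div_lt_iff₀ h1r]; nlinarith
    · rw [le_div_iff₀ h1r]; nlinarith
  have hj0mem : ∀ X : Fin n → Bool, (∃ j, X j = true) → X (j0 X) = true := by
    intro X hT
    simp only [hj0def]
    rw [dif_pos hT]
    exact hT.choose_spec
  have hmapsto : ∀ a ∈ A, F a ∈ B := by
    intro a ha
    rw [hAdef, mem_filter] at ha
    obtain ⟨hpi, hP⟩ := ha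
    obtain ⟨hFa, hfloor⟩ := main a hP
    rw [hFa, Finset.mem_sigma]
    refine ⟨mem_univ _, ?_⟩
    rw [Finset.mem_product]
    dsimp only
    set X := Xof a hP with hXa
    set s := ∑ j ∈ univ.filter (fun j => X j = true), a j with hs
    set t := ∑ j ∈ univ.filter (fun j => ¬ X j = true), a j with ht
    constructor
    · rw [Finset.mem_range]
      by_cases hT : ∃ j, X j = true
      · have hb := bounds s t hfloor
        set α := (r * (t:ℝ) - 1) / (1 - r) with hα
        have hresval : resF a X = ((s:ℤ) - ⌊α⌋ - 1).toNat := by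
          simp only [hresdef]
          rw [if_pos hT]
        have h1 : ⌊α⌋ < (s : ℤ) := by
          have : (⌊α⌋ : ℝ) < (s:ℝ) := lt_of_le_of_lt (Int.floor_le α) hb.1
          exact_mod_cast this
        have h2 : ((s:ℤ) - ⌊α⌋ - 1 : ℤ) < (k:ℤ) := by
          have hfl2 : α - 1 < (⌊α⌋:ℝ) := Int.sub_one_lt_floor α
          have hdiff : r * (t:ℝ) / (1-r) - α = 1/(1-r) := by
            rw [hα, div_sub_div_same]; ring_nf
          have : ((s:ℝ) - (⌊α⌋:ℝ) - 1) < (k:ℝ) := by linarith [hb.2, hk1]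
          exact_mod_cast this
        rw [hresval]; omega
      · have hresval : resF a X = a (j0 X) - 1 := by
          simp only [hresdef]; rw [if_neg hT]
        push_neg at hT
        have hall : ∀ j, ¬ X j = true := fun j => by simp [hT j]
        have hs0 : s = 0 := by
          rw [hs, Finset.filter_false_of_mem (fun j _ => hall j), Finset.sum_empty]
        have htall : t = ∑ j, a j := by
          rw [ht, Finset.filter_true_of_mem (fun j _ => hall j)]
        rw [hs0] at hfloor
        push_cast at hfloor
        rw [zero_add] at hfloor
        have h1 : r * (t:ℝ) < 1 := by
          have h := Int.lt_floor_add_one (r * (t:ℝ))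
          rw [← hfloor] at h
          linarith
        have h2 : (a (j0 X) : ℝ) ≤ (t:ℝ) := by
          have : a (j0 X) ≤ t := by
            rw [htall]
            exact Finset.single_le_sum (f := a) (fun i _ => Nat.zero_le _) (mem_univ _)
          exact_mod_cast this
        have h3 : (a (j0 X) : ℝ) < (k:ℝ) := by
          have hr' : r * (a (j0 X):ℝ) < 1 := by nlinarith
          have : (a (j0 X):ℝ) < 1/r := by rw [lt_div_iff₀ hr0]; linarith
          linarith
        have h4 : a (j0 X) < k := by exact_mod_cast h3
        rw [hresval]; omega
    · rw [Fintype.mem_piFinset]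
      intro j
      by_cases hj : j = j0 X
      · simp [hj]
      · simp only [if_neg hj]
        have := Fintype.mem_piFinset.1 hpi j
        simpa using this
  have hinj : Set.InjOn F ↑A := by
    intro a ha b hb hab
    rw [Finset.mem_coe, hAdef, mem_filter] at ha hb
    obtain ⟨hpia, hPa⟩ := ha
    obtain ⟨hpib, hPb⟩ := hb
    obtain ⟨hFa, hfla⟩ := main a hPa
    obtain ⟨hFb, hflb⟩ := main b hPb
    rw [hFa, hFb] at hab
    have hX : Xof a hPa = Xof b hPb := congrArg Sigma.fst hab
    rw [← hX] at hab hflb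
    set X := Xof a hPa with hXa
    have hsnd : (resF a X, fun j => if j = j0 X then 1 else a j)
        = (resF b X, fun j => if j = j0 X then 1 else b j) :=
      heq_iff_eq.1 (Sigma.mk.inj_iff.1 hab).2
    have hres : resF a X = resF b X := (Prod.ext_iff.1 hsnd).1
    have hupd := (Prod.ext_iff.1 hsnd).2
    have hoff : ∀ j, j ≠ j0 X → a j = b j := by
      intro j hj
      have := congrFun hupd j
      simpa [if_neg hj] using this
    funext j
    by_cases hj : j = j0 X
    swap
    · exact hoff j hj
    subst hj
    by_cases hT : ∃ j, X j = true
    · have hj0X := hj0mem X hT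
      have ht : ∑ j ∈ univ.filter (fun j => ¬ X j = true), a j
          = ∑ j ∈ univ.filter (fun j => ¬ X j = true), b j := by
        refine Finset.sum_congr rfl fun i him => ?_
        refine hoff i fun hcontra => ?_
        exact (mem_filter.1 him).2 (hcontra ▸ hj0X)
      rw [← ht] at hflb
      set sa := ∑ j ∈ univ.filter (fun j => X j = true), a j with hsa
      set sb := ∑ j ∈ univ.filter (fun j => X j = true), b j with hsb
      set t := ∑ j ∈ univ.filter (fun j => ¬ X j = true), a j with htt
      have hba := bounds sa t hfla
      have hbb := bounds sb t hflb
      set α := (r * (t:ℝ) - 1) / (1 - r) with hα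
      have h1a : ⌊α⌋ < (sa : ℤ) := by
        have : (⌊α⌋ : ℝ) < (sa:ℝ) := lt_of_le_of_lt (Int.floor_le α) hba.1
        exact_mod_cast this
      have h1b : ⌊α⌋ < (sb : ℤ) := by
        have : (⌊α⌋ : ℝ) < (sb:ℝ) := lt_of_le_of_lt (Int.floor_le α) hbb.1
        exact_mod_cast this
      have hra : resF a X = ((sa:ℤ) - ⌊α⌋ - 1).toNat := by
        simp only [hresdef]; rw [if_pos hT]
      have hrb : resF b X = ((sb:ℤ) - ⌊α⌋ - 1).toNat := by
        simp only [hresdef]; rw [if_pos hT, ← ht]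
      rw [hra, hrb] at hres
      have hsab : sa = sb := by omega
      have hmem : j0 X ∈ univ.filter (fun j => X j = true) :=
        mem_filter.2 ⟨mem_univ _, hj0X⟩
      have ha' := Finset.add_sum_erase _ a hmem
      have hb' := Finset.add_sum_erase _ b hmem
      have herase : ∑ j ∈ (univ.filter (fun j => X j = true)).erase (j0 X), a j
          = ∑ j ∈ (univ.filter (fun j => X j = true)).erase (j0 X), b j :=
        Finset.sum_congr rfl fun i him => hoff i (Finset.mem_erase.1 him).1
      rw [herase] at ha'
      rw [← hsa] at ha'
      rw [← hsb] at hb'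
      omega
    · have hra : resF a X = a (j0 X) - 1 := by
        simp only [hresdef]; rw [if_neg hT]
      have hrb : resF b X = b (j0 X) - 1 := by
        simp only [hresdef]; rw [if_neg hT]
      have h1a : 1 ≤ a (j0 X) :=
        (Finset.mem_Icc.1 ((Fintype.mem_piFinset.1 hpia) (j0 X))).1
      have h1b : 1 ≤ b (j0 X) :=
        (Finset.mem_Icc.1 ((Fintype.mem_piFinset.1 hpib) (j0 X))).1
      rw [hra, hrb] at hres
      omega
  calc A.card ≤ B.card := Finset.card_le_card_of_injOn F hmapsto hinj
    _ = ∑ X : Fin n → Bool, ((range k) ×ˢ Fintype.piFinset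
          (fun j => if j = j0 X then ({1}:Finset ℕ) else Finset.Icc 1 M)).card := by
        rw [hBdef, Finset.card_sigma]
    _ = ∑ _X : Fin n → Bool, k * M ^ (n-1) := by
        refine Finset.sum_congr rfl fun X _ => ?_
        rw [Finset.card_product, Finset.card_range, Fintype.card_piFinset]
        congr 1
        calc ∏ j, (if j = j0 X then ({1}:Finset ℕ) else Finset.Icc 1 M).card
            = ∏ j, (if j = j0 X then 1 else M) := by
              refine Finset.prod_congr rfl fun j _ => ?_
              by_cases hj : j = j0 X <;> simp [hj, Nat.card_Icc]
          _ = M ^ (n-1) := by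
              rw [← Finset.mul_prod_erase univ _ (mem_univ (j0 X)), if_pos rfl, one_mul]
              rw [Finset.prod_congr rfl (fun j hj => if_neg (Finset.mem_erase.1 hj).1),
                Finset.prod_const]
              rw [Finset.card_erase_of_mem (mem_univ _), Finset.card_univ, Fintype.card_fin]
    _ = 2^n * (k * M^(n-1)) := by
        rw [Finset.sum_const, Finset.card_univ, smul_eq_mul]
        congr 1
        simp [Fintype.card_fun]
    _ = k * 2^n * M^(n-1) := by ring
end

section
/- Fix 0 < r < 1 and let M = ⌊10^{n/2}⌋. If a_1,...,a_n are drawn independently and uniformly at random from {1,...,M}, then the probability that there exists a subset I ⊆ {1,...,n} with Σ_{i∈I} a_i = ⌊r Σ_{j=1}^n a_j⌋ tends to 0 as n → ∞. -/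
open Filter Finset

private lemma fiber_card_le (r : ℝ) (hr0 : 0 < r) (hr1 : r < 1) (m M : ℕ)
    (I : Finset (Fin (m+1))) (b : Fin m → ℕ) :
    ((Fintype.piFinset (fun _ : Fin (m+1) => Finset.Icc 1 M)).filter
      (fun a => ((∑ i ∈ I, (a i : ℤ)) = ⌊r * ∑ j, (a j : ℝ)⌋ ∧ a ∘ Fin.succ = b))).card
      ≤ ⌈1/r⌉₊ + ⌈1/(1-r)⌉₊ := by
  set K := ⌈1/r⌉₊ + ⌈1/(1-r)⌉₊ with hK
  have h1r : (0:ℝ) < 1 - r := by linarith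
  have hKr : 1/r ≤ (K : ℝ) := by
    calc (1/r) ≤ (⌈1/r⌉₊ : ℝ) := Nat.le_ceil _
    _ ≤ K := by push_cast [hK]; linarith [Nat.cast_nonneg (α := ℝ) ⌈1/(1-r)⌉₊]
  have hK1r : 1/(1-r) ≤ (K : ℝ) := by
    calc (1/(1-r)) ≤ (⌈1/(1-r)⌉₊ : ℝ) := Nat.le_ceil _
    _ ≤ K := by push_cast [hK]; linarith [Nat.cast_nonneg (α := ℝ) ⌈1/r⌉₊]
  have hK1 : 1 ≤ K := by
    have : (0:ℝ) < 1/r := by positivity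
    have := lt_of_lt_of_le this hKr
    exact_mod_cast Nat.one_le_iff_ne_zero.mpr (by intro h; rw [h] at this; norm_num at this)
  set s := ((Fintype.piFinset (fun _ : Fin (m+1) => Finset.Icc 1 M)).filter
      (fun a => ((∑ i ∈ I, (a i : ℤ)) = ⌊r * ∑ j, (a j : ℝ)⌋ ∧ a ∘ Fin.succ = b))) with hs
  -- membership facts
  have hmem : ∀ a ∈ s, (∑ i ∈ I, (a i : ℤ)) = ⌊r * ∑ j, ((a j : ℕ) : ℝ)⌋ ∧ a ∘ Fin.succ = b := by
    intro a ha; exact (Finset.mem_filter.mp ha).2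
  -- injectivity of a ↦ a 0 on s
  have hinj : Set.InjOn (fun a : Fin (m+1) → ℕ => a 0) s := by
    intro a ha a' ha' h0
    funext i
    refine Fin.cases h0 (fun j => ?_) i
    have := congrFun ((hmem a ha).2.trans ((hmem a' ha').2).symm) j
    exact this
  rcases s.eq_empty_or_nonempty with he | hne
  · rw [he]; simp
  have hTne : (s.image (fun a => a 0)).Nonempty := hne.image _
  set T := s.image (fun a => a 0) with hT
  set t₀ := T.min' hTne with ht₀
  have hcard : s.card = T.card := (Finset.card_image_of_injOn hinj).symm
  rw [hcard]
  have hsub : T ⊆ Finset.Icc t₀ (t₀ + (K - 1)) := by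
    intro t ht
    rw [Finset.mem_Icc]
    refine ⟨T.min'_le t ht, ?_⟩
    by_contra hgt
    have hd : t₀ + K ≤ t := by omega
    obtain ⟨a, ha, hat⟩ := Finset.mem_image.mp ht
    obtain ⟨a', ha', hat'⟩ := Finset.mem_image.mp (T.min'_mem hTne)
    obtain ⟨heq, hcomp⟩ := hmem a ha
    obtain ⟨heq', hcomp'⟩ := hmem a' ha'
    -- a and a' agree off 0
    have hagree : ∀ i : Fin (m+1), i ≠ 0 → a i = a' i := by
      intro i hi
      obtain ⟨j, rfl⟩ := Fin.exists_succ_eq.mpr hi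
      exact (congrFun hcomp j).trans (congrFun hcomp' j).symm
    -- total sums
    have htotsum : ∀ x : Fin (m+1) → ℕ, x ∘ Fin.succ = b →
        (∑ j, ((x j : ℕ) : ℝ)) = (x 0 : ℝ) + ∑ j : Fin m, (b j : ℝ) := by
      intro x hx
      rw [Fin.sum_univ_succ]
      congr 1
      exact Finset.sum_congr rfl (fun j _ => by rw [← congrFun hx j]; rfl)
    set S : ℝ := ∑ j : Fin m, (b j : ℝ) with hS
    rw [htotsum a hcomp] at heq
    rw [htotsum a' hcomp'] at heq'
    have herase : (∑ i ∈ I.erase 0, (a i : ℤ)) = ∑ i ∈ I.erase 0, (a' i : ℤ) := by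
      refine Finset.sum_congr rfl (fun i hi => ?_)
      rw [hagree i (Finset.ne_of_mem_erase hi)]
    have hdr : (K : ℝ) ≤ (a 0 : ℝ) - (a' 0 : ℝ) := by
      rw [hat, hat']
      have : (t₀ : ℝ) + K ≤ t := by exact_mod_cast hd
      linarith
    by_cases h0 : (0 : Fin (m+1)) ∈ I
    · rw [← Finset.add_sum_erase I _ h0] at heq heq'
      -- heq : a 0 + c = ⌊r*(a0+S)⌋, heq' : a' 0 + c = ⌊r*(a'0+S)⌋
      have hfl1 : (⌊r * ((a 0 : ℝ) + S)⌋ : ℝ) ≤ r * ((a 0 : ℝ) + S) := Int.floor_le _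
      have hfl2 : r * ((a' 0 : ℝ) + S) - 1 < (⌊r * ((a' 0 : ℝ) + S)⌋ : ℝ) := by
        linarith [Int.lt_floor_add_one (r * ((a' 0 : ℝ) + S))]
      have hsub' : ((a 0 : ℤ) : ℝ) - ((a' 0 : ℤ) : ℝ) =
          (⌊r * ((a 0 : ℝ) + S)⌋ : ℝ) - (⌊r * ((a' 0 : ℝ) + S)⌋ : ℝ) := by
        have : ((a 0 : ℤ)) - ((a' 0 : ℤ)) = ⌊r * ((a 0 : ℝ) + S)⌋ - ⌊r * ((a' 0 : ℝ) + S)⌋ := by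
          omega
        exact_mod_cast congrArg (fun z : ℤ => (z : ℝ)) this
      push_cast at hsub'
      have hKub : (1 - r) * (K : ℝ) ≥ 1 := by
        rw [ge_iff_le, ← div_le_iff₀' h1r] at *
        · exact hK1r
      nlinarith
    · rw [Finset.erase_eq_of_notMem h0] at herase
      rw [herase] at heq
      have hfl : ⌊r * ((a 0 : ℝ) + S)⌋ = ⌊r * ((a' 0 : ℝ) + S)⌋ := heq ▸ heq'.symm ▸ rfl
      have h1 : r * ((a 0 : ℝ) + S) - 1 < (⌊r * ((a 0 : ℝ) + S)⌋ : ℝ) :=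
        by linarith [Int.lt_floor_add_one (r * ((a 0 : ℝ) + S))]
      have h2 : (⌊r * ((a' 0 : ℝ) + S)⌋ : ℝ) ≤ r * ((a' 0 : ℝ) + S) := Int.floor_le _
      rw [hfl] at h1
      have hKub : r * (K : ℝ) ≥ 1 := by
        rw [ge_iff_le, ← div_le_iff₀' hr0]
        exact hKr
      nlinarith
  calc T.card ≤ (Finset.Icc t₀ (t₀ + (K - 1))).card := Finset.card_le_card hsub
  _ = K := by rw [Nat.card_Icc]; omega

private lemma count_le (r : ℝ) (hr0 : 0 < r) (hr1 : r < 1) (m M : ℕ) :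
    ((Fintype.piFinset (fun _ : Fin (m+1) => Finset.Icc 1 M)).filter
      (fun a => ∃ I : Finset (Fin (m+1)), (∑ i ∈ I, (a i : ℤ)) = ⌊r * ∑ j, (a j : ℝ)⌋)).card
      ≤ 2 ^ (m+1) * ((⌈1/r⌉₊ + ⌈1/(1-r)⌉₊) * M ^ m) := by
  set F := Fintype.piFinset (fun _ : Fin (m+1) => Finset.Icc 1 M) with hF
  set K := ⌈1/r⌉₊ + ⌈1/(1-r)⌉₊ with hK
  have hsub : F.filter (fun a => ∃ I : Finset (Fin (m+1)),
        (∑ i ∈ I, (a i : ℤ)) = ⌊r * ∑ j, (a j : ℝ)⌋)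
      ⊆ (Finset.univ : Finset (Finset (Fin (m+1)))).biUnion
        (fun I => F.filter (fun a => (∑ i ∈ I, (a i : ℤ)) = ⌊r * ∑ j, (a j : ℝ)⌋)) := by
    intro a ha
    rw [Finset.mem_filter] at ha
    obtain ⟨haF, I, hI⟩ := ha
    exact Finset.mem_biUnion.mpr ⟨I, Finset.mem_univ I, Finset.mem_filter.mpr ⟨haF, hI⟩⟩
  refine (Finset.card_le_card hsub).trans ?_
  refine (Finset.card_biUnion_le).trans ?_
  have hone : ∀ I : Finset (Fin (m+1)),
      (F.filter (fun a => (∑ i ∈ I, (a i : ℤ)) = ⌊r * ∑ j, (a j : ℝ)⌋)).card ≤ K * M ^ m := by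
    intro I
    set sI := F.filter (fun a => (∑ i ∈ I, (a i : ℤ)) = ⌊r * ∑ j, (a j : ℝ)⌋) with hsI
    have himg : sI.image (fun a => a ∘ Fin.succ) ⊆
        Fintype.piFinset (fun _ : Fin m => Finset.Icc 1 M) := by
      intro b hb
      obtain ⟨a, ha, rfl⟩ := Finset.mem_image.mp hb
      have := Fintype.mem_piFinset.mp (Finset.mem_filter.mp ha).1
      exact Fintype.mem_piFinset.mpr (fun j => this j.succ)
    have hfib : ∀ b ∈ sI.image (fun a => a ∘ Fin.succ),
        (sI.filter fun a => a ∘ Fin.succ = b).card ≤ K := by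
      intro b _
      rw [hsI, Finset.filter_filter]
      exact fiber_card_le r hr0 hr1 m M I b
    calc sI.card ≤ K * (sI.image (fun a => a ∘ Fin.succ)).card :=
          Finset.card_le_mul_card_image sI K hfib
    _ ≤ K * (Fintype.piFinset (fun _ : Fin m => Finset.Icc 1 M)).card :=
          Nat.mul_le_mul_left K (Finset.card_le_card himg)
    _ = K * M ^ m := by simp [Fintype.card_piFinset]
  calc (∑ I : Finset (Fin (m+1)),
        (F.filter (fun a => (∑ i ∈ I, (a i : ℤ)) = ⌊r * ∑ j, (a j : ℝ)⌋)).card)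
      ≤ ∑ _I : Finset (Fin (m+1)), K * M ^ m := Finset.sum_le_sum (fun I _ => hone I)
  _ = 2 ^ (m+1) * (K * M ^ m) := by
      rw [Finset.sum_const, Finset.card_univ]
      simp [mul_comm]

/-- With `M = ⌊10^(n/2)⌋` and `a₁,…,aₙ` i.i.d. uniform on `{1,…,M}`, the probability that
some subset of the coefficients sums to `⌊r ∑ aⱼ⌋` tends to 0 as `n → ∞`. -/
theorem stmt_7 (r : ℝ) (hr0 : 0 < r) (hr1 : r < 1) :
    Tendsto (fun n : ℕ =>
        ((Set.ncard {a : Fin n → ℕ |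
            (∀ j, 1 ≤ a j ∧ a j ≤ ⌊(10 : ℝ) ^ ((n : ℝ) / 2)⌋₊) ∧
            ∃ I : Finset (Fin n), (∑ i ∈ I, (a i : ℤ)) = ⌊r * ∑ j, (a j : ℝ)⌋} : ℝ)
          / (⌊(10 : ℝ) ^ ((n : ℝ) / 2)⌋₊ : ℝ) ^ n))
      atTop (nhds 0) := by
  set K := ⌈1/r⌉₊ + ⌈1/(1-r)⌉₊ with hK
  set q : ℝ := 2 / (10:ℝ) ^ ((1:ℝ)/2) with hq
  have h4 : ((4:ℝ)) ^ ((1:ℝ)/2) = 2 := by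
    rw [show (4:ℝ) = 2 ^ (2:ℕ) by norm_num, ← Real.rpow_natCast 2 2,
      ← Real.rpow_mul (by norm_num)]
    norm_num
  have hsqrt2 : (2:ℝ) < (10:ℝ) ^ ((1:ℝ)/2) := by
    conv_lhs => rw [← h4]
    exact Real.rpow_lt_rpow (by norm_num) (by norm_num) (by norm_num)
  have hsqrtpos : (0:ℝ) < (10:ℝ) ^ ((1:ℝ)/2) := by linarith
  have hq0 : 0 ≤ q := by rw [hq]; positivity
  have hq1 : q < 1 := by
    rw [hq, div_lt_one hsqrtpos]; exact hsqrt2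
  set p : ℕ → ℝ := fun n =>
      ((Set.ncard {a : Fin n → ℕ |
            (∀ j, 1 ≤ a j ∧ a j ≤ ⌊(10 : ℝ) ^ ((n : ℝ) / 2)⌋₊) ∧
            ∃ I : Finset (Fin n), (∑ i ∈ I, (a i : ℤ)) = ⌊r * ∑ j, (a j : ℝ)⌋} : ℝ)
          / (⌊(10 : ℝ) ^ ((n : ℝ) / 2)⌋₊ : ℝ) ^ n) with hp
  have hplower : ∀ n, 0 ≤ p n := by
    intro n
    apply div_nonneg (by positivity) (by positivity)
  have hpupper : ∀ n : ℕ, 1 ≤ n → p n ≤ (2 * K) * q ^ n := by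
    intro n hn
    obtain ⟨m, rfl⟩ := Nat.exists_eq_succ_of_ne_zero (Nat.one_le_iff_ne_zero.mp hn)
    set n := m + 1 with hn'
    set M := ⌊(10 : ℝ) ^ ((n : ℝ) / 2)⌋₊ with hM
    set x : ℝ := (10:ℝ) ^ ((n : ℝ) / 2) with hx
    have hx2 : (2:ℝ) ≤ x := by
      refine le_trans hsqrt2.le (Real.rpow_le_rpow_of_exponent_le (by norm_num) ?_)
      have : (1:ℝ) ≤ (n:ℝ) := by exact_mod_cast hn
      linarith
    have hMx : x / 2 ≤ (M:ℝ) := by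
      have := Nat.sub_one_lt_floor x
      rw [← hM] at this
      linarith
    have hMpos : (0:ℝ) < (M:ℝ) := lt_of_lt_of_le (by linarith) hMx
    have hseteq : {a : Fin n → ℕ |
            (∀ j, 1 ≤ a j ∧ a j ≤ M) ∧
            ∃ I : Finset (Fin n), (∑ i ∈ I, (a i : ℤ)) = ⌊r * ∑ j, (a j : ℝ)⌋}
        = ↑((Fintype.piFinset (fun _ : Fin n => Finset.Icc 1 M)).filter
            (fun a => ∃ I : Finset (Fin n), (∑ i ∈ I, (a i : ℤ)) = ⌊r * ∑ j, (a j : ℝ)⌋)) := by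
      ext a
      simp [Fintype.mem_piFinset, Finset.mem_Icc]
    have hcount : (Set.ncard {a : Fin n → ℕ |
            (∀ j, 1 ≤ a j ∧ a j ≤ M) ∧
            ∃ I : Finset (Fin n), (∑ i ∈ I, (a i : ℤ)) = ⌊r * ∑ j, (a j : ℝ)⌋})
        ≤ 2 ^ n * (K * M ^ m) := by
      rw [hseteq, Set.ncard_coe_finset]
      exact count_le r hr0 hr1 m M
    have hcast : ((Set.ncard {a : Fin n → ℕ |
            (∀ j, 1 ≤ a j ∧ a j ≤ M) ∧
            ∃ I : Finset (Fin n), (∑ i ∈ I, (a i : ℤ)) = ⌊r * ∑ j, (a j : ℝ)⌋} : ℕ) : ℝ)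
        ≤ (2:ℝ) ^ n * ((K:ℝ) * (M:ℝ) ^ m) := by
      exact_mod_cast hcount
    have hpn : p n ≤ ((2:ℝ) ^ n * ((K:ℝ) * (M:ℝ) ^ m)) / (M:ℝ) ^ n := by
      exact div_le_div_of_nonneg_right hcast (by positivity) |>.trans_eq rfl
    have hstep2 : ((2:ℝ) ^ n * ((K:ℝ) * (M:ℝ) ^ m)) / (M:ℝ) ^ n
        = (2:ℝ) ^ n * (K:ℝ) / (M:ℝ) := by
      rw [hn', pow_succ]
      field_simp
      ring
    have hstep3 : (2:ℝ) ^ n * (K:ℝ) / (M:ℝ) ≤ (2:ℝ) ^ n * (K:ℝ) / (x / 2) :=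
      div_le_div_of_nonneg_left (by positivity) (by linarith) hMx
    have hxpow : x = ((10:ℝ) ^ ((1:ℝ)/2)) ^ n := by
      rw [hx, ← Real.rpow_natCast ((10:ℝ) ^ ((1:ℝ)/2)) n, ← Real.rpow_mul (by norm_num)]
      ring_nf
    have hstep4 : (2:ℝ) ^ n * (K:ℝ) / (x / 2) = (2 * K) * q ^ n := by
      rw [hq, div_pow, hxpow]
      have : ((10:ℝ) ^ ((1:ℝ)/2)) ^ n > 0 := by positivity
      field_simp
    calc p n ≤ ((2:ℝ) ^ n * ((K:ℝ) * (M:ℝ) ^ m)) / (M:ℝ) ^ n := hpn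
    _ = (2:ℝ) ^ n * (K:ℝ) / (M:ℝ) := hstep2
    _ ≤ (2:ℝ) ^ n * (K:ℝ) / (x / 2) := hstep3
    _ = (2 * K) * q ^ n := hstep4
  have hlim : Tendsto (fun n : ℕ => (2 * (K:ℝ)) * q ^ n) atTop (nhds 0) := by
    have := (tendsto_pow_atTop_nhds_zero_of_lt_one hq0 hq1).const_mul (2 * (K:ℝ))
    simpa using this
  refine tendsto_of_tendsto_of_tendsto_of_le_of_le' tendsto_const_nhds hlim
    (Eventually.of_forall hplower) ?_
  filter_upwards [eventually_ge_atTop 1] with n hn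
  exact hpupper n hn
end

section
/- Let a_1,...,a_n be positive reals satisfying Property 1 (Σ_{i∈I} a_i ≤ (1/n^k)Σ_j a_j whenever |I| ≤ n^{1-ε}), and let β satisfy (1/n^k)Σ_j a_j ≤ β ≤ (1 − 1/n^k)Σ_j a_j. Then for every I ⊆ {1,...,n} with |I| ≤ n^{1-ε} and every assignment of values x_i ∈ {0,1} for i ∈ I, there exist x_i ∈ [0,1] for i ∉ I such that Σ_{j=1}^n a_j x_j = β. -/
/-- Under Property 1 and a right-hand side in the window
`[(1/n^k)∑aⱼ, (1−1/n^k)∑aⱼ]`, no branch-and-bound node fixing at most `n^{1−ε}`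
variables is pruned by LP infeasibility. -/
theorem stmt_10 (n : ℕ) (hn : 0 < n) (k ε : ℝ) (hk : 0 < k) (hkε : k < ε) (hε : ε < 1)
    (a : Fin n → ℝ) (ha : ∀ j, 0 < a j)
    (hprop1 : ∀ I : Finset (Fin n), (I.card : ℝ) ≤ (n : ℝ) ^ ((1 : ℝ) - ε) →
      ∑ i ∈ I, a i ≤ (1 / (n : ℝ) ^ k) * ∑ j, a j)
    (β : ℝ)
    (hβ1 : (1 / (n : ℝ) ^ k) * ∑ j, a j ≤ β)
    (hβ2 : β ≤ (1 - 1 / (n : ℝ) ^ k) * ∑ j, a j) :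
    ∀ I : Finset (Fin n), (I.card : ℝ) ≤ (n : ℝ) ^ ((1 : ℝ) - ε) →
      ∀ x : Fin n → ℝ, (∀ i ∈ I, x i = 0 ∨ x i = 1) →
        ∃ y : Fin n → ℝ, (∀ i ∈ I, y i = x i) ∧ (∀ i, 0 ≤ y i ∧ y i ≤ 1) ∧
          ∑ j, a j * y j = β := by
  intro I hI x hx
  have hsumpos : 0 < ∑ j, a j := by
    apply Finset.sum_pos (fun j _ => ha j)
    have : Nonempty (Fin n) := ⟨⟨0, hn⟩⟩
    exact Finset.univ_nonempty
  -- rule out n = 1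
  have hn2 : 1 < n := by
    by_contra h
    interval_cases n
    have h1 : (1 : ℝ) ^ k = 1 := Real.one_rpow k
    simp only [Nat.cast_one, h1] at hβ1 hβ2
    nlinarith
  have hnR : (1 : ℝ) < n := by exact_mod_cast hn2
  -- I is not everything
  have hcard : I.card < n := by
    have : (n : ℝ) ^ ((1 : ℝ) - ε) < (n : ℝ) ^ (1 : ℝ) :=
      Real.rpow_lt_rpow_of_exponent_lt hnR (by linarith)
    rw [Real.rpow_one] at this
    exact_mod_cast lt_of_le_of_lt hI this
  have hIcne : Iᶜ.Nonempty := by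
    rw [Finset.nonempty_iff_ne_empty]
    intro h
    have := Finset.card_add_card_compl I
    rw [h, Finset.card_empty, Fintype.card_fin] at this
    omega
  set S : ℝ := ∑ i ∈ I, a i * x i with hSdef
  set T : ℝ := ∑ i ∈ Iᶜ, a i with hTdef
  have hT : 0 < T := Finset.sum_pos (fun j _ => ha j) hIcne
  have hIc := hprop1 I hI
  have hS0 : 0 ≤ S := Finset.sum_nonneg (fun i hi => by
    rcases hx i hi with h | h <;> simp [h, (ha i).le])
  have hS1 : S ≤ ∑ i ∈ I, a i := Finset.sum_le_sum (fun i hi => by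
    rcases hx i hi with h | h <;> simp [h, (ha i).le])
  have hsplit : (∑ i ∈ I, a i) + T = ∑ j, a j := Finset.sum_add_sum_compl I a
  have h1 : 0 ≤ β - S := by linarith
  have h2 : β - S ≤ T := by nlinarith
  set c : ℝ := (β - S) / T with hcdef
  have hc0 : 0 ≤ c := div_nonneg h1 hT.le
  have hc1 : c ≤ 1 := by rw [div_le_one hT]; exact h2
  refine ⟨fun i => if i ∈ I then x i else c, fun i hi => by simp [hi], fun i => ?_, ?_⟩
  · by_cases hi : i ∈ I
    · rcases hx i hi with h | h <;> simp [hi, h]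
    · simp [hi, hc0, hc1]
  · rw [← Finset.sum_add_sum_compl I]
    have e1 : ∑ i ∈ I, a i * (if i ∈ I then x i else c) = S :=
      Finset.sum_congr rfl (fun i hi => by simp [hi])
    have e2 : ∑ i ∈ Iᶜ, a i * (if i ∈ I then x i else c) = T * c := by
      rw [Finset.sum_mul]
      exact Finset.sum_congr rfl (fun i hi => by
        simp [Finset.mem_compl.mp hi])
    rw [e1, e2, hcdef, mul_div_cancel₀ _ hT.ne']
    ring
end

section
/- Fix 0 < k < ε < 1 and let M = ⌊10^{n/2}⌋. If a_1,...,a_n are i.i.d. uniform on {1,...,M}, then the probability that there exists I ⊆ {1,...,n} with |I| ≤ n^{1-ε} and Σ_{i∈I} a_i > (1/n^k)Σ_{j=1}^n a_j is at most e^{-2n(1/2 − 2n^{k-ε})²}, which tends to 0 as n → ∞. -/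
set_option maxHeartbeats 1000000

open Filter Finset Topology

private lemma stmt15_aux (k ε : ℝ) (hk : 0 < k) (hkε : k < ε) (hε : ε < 1) (n : ℕ)
    (hn : 2 ≤ n)
    (hlog : Real.log n + 3 ≤ (1/40) * (n:ℝ) ^ (ε - k)) :
    ((Set.ncard {a : Fin n → ℕ |
        (∀ j, 1 ≤ a j ∧ a j ≤ ⌊(10 : ℝ) ^ ((n : ℝ) / 2)⌋₊) ∧
        ∃ I : Finset (Fin n), (I.card : ℝ) ≤ (n : ℝ) ^ ((1 : ℝ) - ε) ∧
          (1 / (n : ℝ) ^ k) * ∑ j, (a j : ℝ) < ∑ i ∈ I, (a i : ℝ)} : ℝ)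
      / (⌊(10 : ℝ) ^ ((n : ℝ) / 2)⌋₊ : ℝ) ^ n)
      ≤ Real.exp (-2 * n * ((1 : ℝ) / 2 - 2 * (n : ℝ) ^ (k - ε)) ^ 2) := by
  classical
  set M : ℕ := ⌊(10 : ℝ) ^ ((n : ℝ) / 2)⌋₊ with hMdef
  have hn1 : (1:ℝ) ≤ n := by exact_mod_cast Nat.one_le_of_lt hn
  have hn2 : (2:ℝ) ≤ n := by exact_mod_cast hn
  have hn0 : (0:ℝ) < n := by linarith
  have hδ : (0:ℝ) < 1 + k - ε := by linarith
  have hM2 : 2 ≤ M := by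
    apply Nat.le_floor
    have h1 : (1:ℝ) ≤ (n:ℝ)/2 := by linarith
    have := Real.rpow_le_rpow_of_exponent_le (by norm_num : (1:ℝ) ≤ 10) h1
    rw [Real.rpow_one] at this
    push_cast
    linarith
  have hM0 : (0:ℝ) < M := by exact_mod_cast Nat.lt_of_lt_of_le (by norm_num) hM2
  set D : ℝ := (n:ℝ) ^ (1 + k - ε) with hDdef
  set x : ℝ := 2 * D with hxdef
  set r : ℕ := ⌈x⌉₊ with hrdef
  have hD1 : (1:ℝ) ≤ D := Real.one_le_rpow hn1 hδ.le
  have hx0 : (0:ℝ) ≤ x := by positivity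
  have hrx : (r:ℝ) ≤ x + 1 := (Nat.ceil_lt_add_one hx0).le
  have hr3 : (r:ℝ) ≤ 3 * D := by rw [hxdef] at hrx; linarith
  have hL0 : 0 ≤ Real.log n := Real.log_nonneg hn1
  have hlogn : Real.log 2 ≤ Real.log n := Real.log_le_log (by norm_num) hn2
  have hlog2 : (0.6931:ℝ) < Real.log 2 := lt_of_le_of_lt (by norm_num) Real.log_two_gt_d9
  have key : D * (Real.log n + 3) ≤ (1/40) * n := by
    have hD0 : (0:ℝ) < D := by linarith
    have h2 : D * (Real.log n + 3) ≤ D * ((1/40) * (n:ℝ) ^ (ε - k)) :=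
      mul_le_mul_of_nonneg_left hlog hD0.le
    have h3 : D * (n:ℝ) ^ (ε - k) = (n:ℝ) := by
      rw [hDdef, ← Real.rpow_add hn0]
      norm_num
    calc D * (Real.log n + 3) ≤ D * ((1/40) * (n:ℝ) ^ (ε - k)) := h2
      _ = (1/40) * (D * (n:ℝ) ^ (ε - k)) := by ring
      _ = (1/40) * n := by rw [h3]
  have hrnR : (r:ℝ) ≤ n := by
    have : D * 3 ≤ D * (Real.log n + 3) := by nlinarith
    nlinarith
  have hrn : r ≤ n := by exact_mod_cast hrnR
  set m0 : ℕ := n - r with hm0def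
  have hm0cast : (m0:ℝ) = (n:ℝ) - r := by
    rw [hm0def]; push_cast [hrn]; ring
  -- counting
  set F : Finset (Fin n) → Finset (Fin n → ℕ) := fun S =>
    Fintype.piFinset (fun j => if j ∈ S then Finset.Icc 1 (M/2) else Finset.Icc 1 M) with hFdef
  have hsub : {a : Fin n → ℕ |
        (∀ j, 1 ≤ a j ∧ a j ≤ M) ∧
        ∃ I : Finset (Fin n), (I.card : ℝ) ≤ (n : ℝ) ^ ((1 : ℝ) - ε) ∧
          (1 / (n : ℝ) ^ k) * ∑ j, (a j : ℝ) < ∑ i ∈ I, (a i : ℝ)} ⊆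
      ↑((Finset.powersetCard m0 (Finset.univ : Finset (Fin n))).biUnion F) := by
    rintro a ⟨hrange, I, hIcard, hIsum⟩
    have hnk : (0:ℝ) < (n:ℝ)^k := Real.rpow_pos_of_pos hn0 k
    have hsumI : ∑ i ∈ I, (a i:ℝ) ≤ (I.card : ℝ) * M := by
      calc ∑ i ∈ I, (a i:ℝ) ≤ ∑ _i ∈ I, (M:ℝ) :=
            Finset.sum_le_sum fun i _ => by exact_mod_cast (hrange i).2
        _ = (I.card : ℝ) * M := by rw [Finset.sum_const, nsmul_eq_mul]
    have hSup : ∑ j, (a j:ℝ) < D * M := by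
      have h1 : (1/(n:ℝ)^k) * ∑ j, (a j:ℝ) < (n:ℝ)^((1:ℝ)-ε) * M :=
        lt_of_lt_of_le hIsum (hsumI.trans (mul_le_mul_of_nonneg_right hIcard hM0.le))
      have h2 : (n:ℝ)^k * ((n:ℝ)^((1:ℝ)-ε) * M) = D * M := by
        rw [hDdef, ← mul_assoc, ← Real.rpow_add hn0,
          show k + ((1:ℝ)-ε) = 1 + k - ε by ring]
      have h3 : ∑ j, (a j:ℝ) < (n:ℝ)^k * ((n:ℝ)^((1:ℝ)-ε) * M) := by
        rw [div_mul_eq_mul_div, one_mul, div_lt_iff₀ hnk] at h1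
        linarith [h1]
      linarith [h3, h2.le, h2.ge]
    set ℓ : ℕ := (Finset.univ.filter fun j : Fin n => ¬ (2 * a j ≤ M)).card with hldef
    have hlow : (ℓ:ℝ) * ((M:ℝ)/2) ≤ ∑ j, (a j:ℝ) := by
      have h1 : ∀ j ∈ Finset.univ.filter fun j : Fin n => ¬ (2 * a j ≤ M),
          (M:ℝ)/2 ≤ (a j : ℝ) := by
        intro j hj
        rw [Finset.mem_filter] at hj
        have : M < 2 * a j := lt_of_not_ge hj.2
        have : (M:ℝ) < 2 * a j := by exact_mod_cast this
        linarith
      calc (ℓ:ℝ) * ((M:ℝ)/2) = ∑ _j ∈ Finset.univ.filter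
              fun j : Fin n => ¬ (2 * a j ≤ M), (M:ℝ)/2 := by
            rw [Finset.sum_const, nsmul_eq_mul]
        _ ≤ ∑ j ∈ Finset.univ.filter fun j : Fin n => ¬ (2 * a j ≤ M), (a j:ℝ) :=
            Finset.sum_le_sum h1
        _ ≤ ∑ j, (a j:ℝ) :=
            Finset.sum_le_sum_of_subset_of_nonneg (Finset.filter_subset _ _)
              (fun j _ _ => by positivity)
    have hℓx : (ℓ:ℝ) < x := by
      have := hlow.trans_lt hSup
      rw [hxdef]
      nlinarith
    have hℓr : ℓ ≤ r := (Nat.lt_ceil.2 hℓx).le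
    have hScard : m0 ≤ (Finset.univ.filter fun j : Fin n => 2 * a j ≤ M).card := by
      have := Finset.card_filter_add_card_filter_not
        (s := (Finset.univ : Finset (Fin n))) (p := fun j => 2 * a j ≤ M)
      simp only [Finset.card_univ, Fintype.card_fin] at this
      omega
    obtain ⟨S, hSsub, hScard'⟩ := Finset.exists_subset_card_eq hScard
    refine Finset.mem_coe.2 (Finset.mem_biUnion.2 ⟨S, ?_, ?_⟩)
    · exact Finset.mem_powersetCard.2 ⟨Finset.subset_univ S, hScard'⟩
    · refine Fintype.mem_piFinset.2 fun j => ?_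
      by_cases hj : j ∈ S
      · have h2 : 2 * a j ≤ M := by
          have := hSsub hj
          simpa using this
        simp only [hj, if_true, Finset.mem_Icc]
        exact ⟨(hrange j).1, Nat.le_div_iff_mul_le (by norm_num) |>.2 (by omega)⟩
      · simp only [hj, if_false, Finset.mem_Icc]
        exact ⟨(hrange j).1, (hrange j).2⟩
  have hcard : Set.ncard {a : Fin n → ℕ |
        (∀ j, 1 ≤ a j ∧ a j ≤ M) ∧
        ∃ I : Finset (Fin n), (I.card : ℝ) ≤ (n : ℝ) ^ ((1 : ℝ) - ε) ∧
          (1 / (n : ℝ) ^ k) * ∑ j, (a j : ℝ) < ∑ i ∈ I, (a i : ℝ)}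
      ≤ n.choose m0 * ((M/2)^m0 * M^(n-m0)) := by
    have h1 := Set.ncard_le_ncard hsub (Finset.finite_toSet _)
    rw [Set.ncard_coe_finset] at h1
    refine h1.trans (Finset.card_biUnion_le.trans ?_)
    have hFcard : ∀ S ∈ Finset.powersetCard m0 (Finset.univ : Finset (Fin n)),
        (F S).card = (M/2)^m0 * M^(n-m0) := by
      intro S hS
      obtain ⟨-, hScard⟩ := Finset.mem_powersetCard.1 hS
      rw [hFdef]
      simp only [Fintype.card_piFinset]
      rw [← Finset.prod_mul_prod_compl S]
      have e1 : ∏ j ∈ S, (if j ∈ S then Finset.Icc 1 (M/2) else Finset.Icc 1 M).card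
          = (M/2)^m0 := by
        rw [Finset.prod_congr rfl fun j hj => by rw [if_pos hj]]
        simp [hScard, Nat.card_Icc]
      have e2 : ∏ j ∈ Sᶜ, (if j ∈ S then Finset.Icc 1 (M/2) else Finset.Icc 1 M).card
          = M^(n-m0) := by
        rw [Finset.prod_congr rfl fun j hj => by rw [if_neg (Finset.mem_compl.1 hj)]]
        simp [Finset.card_compl, hScard, Nat.card_Icc]
      rw [e1, e2]
    rw [Finset.sum_congr rfl hFcard, Finset.sum_const, smul_eq_mul,
      Finset.card_powersetCard, Finset.card_univ, Fintype.card_fin]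
  -- real arithmetic
  have hMn : (0:ℝ) < (M:ℝ)^n := pow_pos hM0 n
  have hhalf : ((M/2 : ℕ):ℝ) ≤ (1/2) * (M:ℝ) := by
    have := Nat.cast_div_le (α := ℝ) (m := M) (n := 2)
    push_cast at this
    linarith
  have step1 : ((Set.ncard {a : Fin n → ℕ |
        (∀ j, 1 ≤ a j ∧ a j ≤ M) ∧
        ∃ I : Finset (Fin n), (I.card : ℝ) ≤ (n : ℝ) ^ ((1 : ℝ) - ε) ∧
          (1 / (n : ℝ) ^ k) * ∑ j, (a j : ℝ) < ∑ i ∈ I, (a i : ℝ)} : ℝ))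
      / (M:ℝ)^n ≤ (n.choose m0 : ℝ) * (1/2)^m0 := by
    rw [div_le_iff₀ hMn]
    refine ((Nat.cast_le (α := ℝ)).mpr hcard).trans ?_
    push_cast
    have hpow : ((M/2 : ℕ):ℝ)^m0 ≤ ((1/2) * (M:ℝ))^m0 :=
      pow_le_pow_left₀ (by positivity) hhalf m0
    have hMn_eq : (M:ℝ)^n = (M:ℝ)^m0 * (M:ℝ)^(n-m0) := by
      rw [← pow_add, Nat.add_sub_cancel' (Nat.sub_le n r)]
    calc (n.choose m0 : ℝ) * (((M/2 : ℕ):ℝ)^m0 * (M:ℝ)^(n-m0))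
        ≤ (n.choose m0 : ℝ) * (((1/2) * (M:ℝ))^m0 * (M:ℝ)^(n-m0)) := by
          exact mul_le_mul_of_nonneg_left
            (mul_le_mul_of_nonneg_right hpow (by positivity)) (by positivity)
      _ = (n.choose m0 : ℝ) * (1/2)^m0 * (M:ℝ)^n := by
          rw [hMn_eq, mul_pow]; ring
  have step2 : (n.choose m0 : ℝ) * (1/2)^m0
      ≤ Real.exp (-2 * n * ((1 : ℝ) / 2 - 2 * (n : ℝ) ^ (k - ε)) ^ 2) := by
    have hchoose : (n.choose m0 : ℝ) ≤ (n:ℝ)^r := by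
      have h1 : n.choose m0 = n.choose r := by
        rw [hm0def]; exact Nat.choose_symm hrn
      have h2 : n.choose r ≤ n^r := Nat.choose_le_pow n r
      calc (n.choose m0 : ℝ) = (n.choose r : ℝ) := by rw [h1]
        _ ≤ ((n^r : ℕ) : ℝ) := by exact_mod_cast h2
        _ = (n:ℝ)^r := by push_cast; ring
    have hpow1 : (n:ℝ)^r = Real.exp (Real.log n * r) := by
      rw [← Real.rpow_natCast (n:ℝ) r, Real.rpow_def_of_pos hn0]
    have hpow2 : ((1:ℝ)/2)^m0 = Real.exp (-(Real.log 2) * m0) := by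
      rw [← Real.rpow_natCast ((1:ℝ)/2) m0, Real.rpow_def_of_pos (by norm_num),
        one_div, Real.log_inv]
    have hhq : (0:ℝ) ≤ ((1:ℝ)/2)^m0 := by positivity
    calc (n.choose m0 : ℝ) * (1/2)^m0 ≤ (n:ℝ)^r * (1/2)^m0 :=
          mul_le_mul_of_nonneg_right hchoose hhq
      _ = Real.exp (Real.log n * r + (-(Real.log 2) * m0)) := by
          rw [hpow1, hpow2, Real.exp_add]
      _ ≤ Real.exp (-2 * n * ((1 : ℝ) / 2 - 2 * (n : ℝ) ^ (k - ε)) ^ 2) := by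
          apply Real.exp_le_exp.2
          set u : ℝ := (n:ℝ)^(k-ε) with hudef
          have hu0 : 0 ≤ u := Real.rpow_nonneg hn0.le _
          have hu1 : u ≤ 1 := Real.rpow_le_one_of_one_le_of_nonpos hn1 (by linarith)
          have huD : u * n = D := by
            rw [hudef, hDdef, show (1:ℝ) + k - ε = (k - ε) + 1 by ring,
              Real.rpow_add hn0, Real.rpow_one]
          have eR : -2 * (n:ℝ) * ((1:ℝ)/2 - 2 * u)^2 = -(n:ℝ)/2 + 4*D - 8*(D*u) := by
            rw [← huD]; ring
          rw [hm0cast, eR]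
          have e1 : Real.log n * r ≤ Real.log n * (3*D) :=
            mul_le_mul_of_nonneg_left hr3 hL0
          have e2 : Real.log 2 * r ≤ Real.log n * r :=
            mul_le_mul_of_nonneg_right hlogn (Nat.cast_nonneg r)
          have e3 : D * u ≤ D * 1 := mul_le_mul_of_nonneg_left hu1 (by linarith)
          have e4 : (0.6931:ℝ) * n ≤ Real.log 2 * n :=
            mul_le_mul_of_nonneg_right hlog2.le hn0.le
          linarith [e1, e2, e3, e4, key, hD1]
  exact step1.trans step2

/-- With `M = ⌊10^(n/2)⌋` and i.i.d. uniform coefficients, the probability that Property 1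
fails (some subset of size at most `n^{1-ε}` carries more than a `1/n^k` fraction of the
total sum) is eventually at most `e^{-2n(1/2 − 2n^{k-ε})²}` and tends to 0. -/
theorem stmt_15 (k ε : ℝ) (hk : 0 < k) (hkε : k < ε) (hε : ε < 1) :
    (∀ᶠ n : ℕ in atTop,
      ((Set.ncard {a : Fin n → ℕ |
          (∀ j, 1 ≤ a j ∧ a j ≤ ⌊(10 : ℝ) ^ ((n : ℝ) / 2)⌋₊) ∧
          ∃ I : Finset (Fin n), (I.card : ℝ) ≤ (n : ℝ) ^ ((1 : ℝ) - ε) ∧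
            (1 / (n : ℝ) ^ k) * ∑ j, (a j : ℝ) < ∑ i ∈ I, (a i : ℝ)} : ℝ)
        / (⌊(10 : ℝ) ^ ((n : ℝ) / 2)⌋₊ : ℝ) ^ n)
        ≤ Real.exp (-2 * n * ((1 : ℝ) / 2 - 2 * (n : ℝ) ^ (k - ε)) ^ 2)) ∧
    Tendsto (fun n : ℕ =>
      ((Set.ncard {a : Fin n → ℕ |
          (∀ j, 1 ≤ a j ∧ a j ≤ ⌊(10 : ℝ) ^ ((n : ℝ) / 2)⌋₊) ∧
          ∃ I : Finset (Fin n), (I.card : ℝ) ≤ (n : ℝ) ^ ((1 : ℝ) - ε) ∧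
            (1 / (n : ℝ) ^ k) * ∑ j, (a j : ℝ) < ∑ i ∈ I, (a i : ℝ)} : ℝ)
        / (⌊(10 : ℝ) ^ ((n : ℝ) / 2)⌋₊ : ℝ) ^ n)) atTop (nhds 0) := by
  have hc : (0:ℝ) < ε - k := by linarith
  have h1 : ∀ᶠ x : ℝ in atTop, Real.log x + 3 ≤ (1/40) * x ^ (ε - k) := by
    have ho := isLittleO_log_rpow_atTop hc
    have h2 := ho.bound (by norm_num : (0:ℝ) < 1/80)
    have h3 : Tendsto (fun x : ℝ => x ^ (ε - k)) atTop atTop := tendsto_rpow_atTop hc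
    filter_upwards [h2, h3.eventually_ge_atTop 240, eventually_ge_atTop (1:ℝ)]
      with x hx hx2 hx1
    have hl0 : 0 ≤ Real.log x := Real.log_nonneg hx1
    have hp0 : 0 ≤ x ^ (ε - k) := Real.rpow_nonneg (by linarith) _
    rw [Real.norm_eq_abs, Real.norm_eq_abs, abs_of_nonneg hl0, abs_of_nonneg hp0] at hx
    linarith
  have hev : ∀ᶠ n : ℕ in atTop,
      ((Set.ncard {a : Fin n → ℕ |
          (∀ j, 1 ≤ a j ∧ a j ≤ ⌊(10 : ℝ) ^ ((n : ℝ) / 2)⌋₊) ∧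
          ∃ I : Finset (Fin n), (I.card : ℝ) ≤ (n : ℝ) ^ ((1 : ℝ) - ε) ∧
            (1 / (n : ℝ) ^ k) * ∑ j, (a j : ℝ) < ∑ i ∈ I, (a i : ℝ)} : ℝ)
        / (⌊(10 : ℝ) ^ ((n : ℝ) / 2)⌋₊ : ℝ) ^ n)
        ≤ Real.exp (-2 * n * ((1 : ℝ) / 2 - 2 * (n : ℝ) ^ (k - ε)) ^ 2) := by
    filter_upwards [tendsto_natCast_atTop_atTop.eventually h1, eventually_ge_atTop 2]
      with n hn1 hn2
    exact stmt15_aux k ε hk hkε hε n hn2 hn1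
  refine ⟨hev, ?_⟩
  have hu0 : Tendsto (fun n : ℕ => (n:ℝ) ^ (k - ε)) atTop (𝓝 0) := by
    have h := (tendsto_rpow_neg_atTop hc).comp
      (tendsto_natCast_atTop_atTop (R := ℝ))
    exact h.congr fun n => by simp [Function.comp, neg_sub]
  have hexp : Tendsto (fun n : ℕ =>
      Real.exp (-2 * n * ((1 : ℝ) / 2 - 2 * (n : ℝ) ^ (k - ε)) ^ 2)) atTop (𝓝 0) := by
    apply Real.tendsto_exp_atBot.comp
    have hbot : Tendsto (fun n : ℕ => -((n:ℝ)/8)) atTop atBot :=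
      tendsto_neg_atBot_iff.mpr (tendsto_natCast_atTop_atTop.atTop_div_const (by norm_num))
    apply tendsto_atBot_mono' atTop ?_ hbot
    filter_upwards [hu0.eventually_lt_const (by norm_num : (0:ℝ) < 1/8)] with n hn
    have hu0' : 0 ≤ (n:ℝ) ^ (k - ε) := Real.rpow_nonneg (Nat.cast_nonneg n) _
    have hn0 : (0:ℝ) ≤ n := Nat.cast_nonneg n
    have h16 : (1:ℝ)/16 ≤ ((1:ℝ)/2 - 2*(n:ℝ)^(k-ε))^2 := by nlinarith
    nlinarith [mul_le_mul_of_nonneg_left h16 hn0]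
  exact squeeze_zero' (Eventually.of_forall fun n => by positivity) hev hexp
end

section
/- Fix reals 0 < r < 1 and 0 < ε < 1, and let M = ⌊10^{n/2}⌋. If a_1,...,a_n are i.i.d. uniform on {1,...,M} and β = ⌊r Σ_{j=1}^n a_j⌋, then the probability that every branch-and-bound tree for the problem {x ∈ {0,1}^n : Σ a_j x_j = β} (branching on individual variables in any order, pruning a node only if its LP relaxation with the fixed variables is infeasible) has at least 2^{n^{1-ε}} nodes tends to 1 as n → ∞. -/
/-!
Fixing the variables of a node moves each end of the range `[0, ∑ aⱼ]` of `∑ aⱼ xⱼ` over the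
LP box by at most `M` per fixed variable, and the intermediate value theorem fills the range in
between. So if `d M` fits between `β = ⌊r ∑ aⱼ⌋` and both ends, every node with fewer than `d`
fixings is LP-feasible, hence not a leaf, and every branch-and-bound tree contains a complete
binary tree of depth `d`. For `d = ⌈n^(1-ε)⌉ = o(n)` this margin exists as soon as
`∑ aⱼ ≥ n M / 16`, which can only fail if at least half of the `aⱼ` are at most `M / 8`; by a union
bound over the positions of those entries this has probability at most `2ⁿ 8^(-n/2) ≤ 2^(-n/2)`.
-/

open Filter

/-- The LP relaxation of the subset sum instance `∑ aⱼ xⱼ = β`, `x ∈ [0,1]ⁿ`, is feasible at a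
branch-and-bound node given by the list `σ` of branching decisions (variable, 0/1 value). -/
def LPFeasibleAt (n : ℕ) (a : Fin n → ℕ) (β : ℤ) (σ : List (Fin n × Bool)) : Prop :=
  ∃ x : Fin n → ℝ, (∀ j, 0 ≤ x j ∧ x j ≤ 1) ∧
    (∀ p ∈ σ, x p.1 = if p.2 then 1 else 0) ∧
    (∑ j, (a j : ℝ) * x j) = (β : ℝ)

/-- `T` is a branch-and-bound tree for the subset sum instance `∑ aⱼ xⱼ = β`, `x ∈ {0,1}ⁿ`:
nodes are identified with their lists of branching decisions, the root belongs to `T`, every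
non-leaf node branches on a single previously unfixed variable (creating the two children
fixing it to 0 and to 1), and a node may be a leaf only if it is pruned by LP infeasibility
or has all `n` variables fixed. -/
def IsBBTree (n : ℕ) (a : Fin n → ℕ) (β : ℤ) (T : Set (List (Fin n × Bool))) : Prop :=
  T.Finite ∧
  ([] : List (Fin n × Bool)) ∈ T ∧
  (∀ σ ∈ T, (∃ j b, σ ++ [(j, b)] ∈ T) →
    ∃ j : Fin n, j ∉ σ.map Prod.fst ∧
      σ ++ [(j, false)] ∈ T ∧ σ ++ [(j, true)] ∈ T ∧
      ∀ j' b, σ ++ [(j', b)] ∈ T → j' = j) ∧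
  (∀ σ ∈ T, (∀ j b, σ ++ [(j, b)] ∉ T) → ¬ LPFeasibleAt n a β σ ∨ σ.length = n)

open Finset

def AllBBTreesHaveTwoPowNodes (n : ℕ) (r N : ℝ) (a : Fin n → ℕ) : Prop :=
  ∀ T : Set (List (Fin n × Bool)),
    IsBBTree n a ⌊r * ∑ j, (a j : ℝ)⌋ T → (2 : ℝ) ^ N ≤ (Set.ncard T : ℝ)

theorem card_piFinset_filter_many_mem_le {ι α : Type*} [Fintype ι] [DecidableEq ι]
    [DecidableEq α] (s t : Finset α) (k : ℕ) :
    #{f ∈ Fintype.piFinset (fun _ : ι => s) | k ≤ #{i | f i ∈ t}} ≤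
      (Fintype.card ι).choose k * #t ^ k * #s ^ (Fintype.card ι - k) := by
  set boxes : Finset ι → Finset (ι → α) := fun S =>
    Fintype.piFinset fun i => if i ∈ S then t else s
  have hcover : {f ∈ Fintype.piFinset (fun _ : ι => s) | k ≤ #{i | f i ∈ t}} ⊆
      (univ.powersetCard k).biUnion boxes := by
    intro f hf
    obtain ⟨hfs, hk⟩ := mem_filter.mp hf
    obtain ⟨S, hSt, hSk⟩ := exists_subset_card_eq hk
    refine mem_biUnion.mpr ⟨S, mem_powersetCard.mpr ⟨subset_univ S, hSk⟩, ?_⟩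
    refine Fintype.mem_piFinset.mpr fun i => ?_
    split_ifs with hi
    · exact (mem_filter.mp (hSt hi)).2
    · exact Fintype.mem_piFinset.mp hfs i
  have hbox : ∀ S ∈ univ.powersetCard k, #(boxes S) = #t ^ k * #s ^ (Fintype.card ι - k) := by
    intro S hS
    obtain ⟨-, hSk⟩ := mem_powersetCard.mp hS
    simp only [boxes, Fintype.card_piFinset, apply_ite card, prod_ite, prod_const,
      filter_mem_eq_inter, univ_inter, hSk]
    rw [filter_not, card_sdiff_of_subset (filter_subset _ _), filter_mem_eq_inter, univ_inter,
      hSk, card_univ]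
  calc _ ≤ #((univ.powersetCard k).biUnion boxes) := card_le_card hcover
    _ ≤ ∑ S ∈ univ.powersetCard k, #(boxes S) := card_biUnion_le
    _ = _ := by rw [sum_congr rfl hbox, sum_const, card_powersetCard, card_univ, smul_eq_mul,
      mul_assoc]

theorem exists_mem_Icc_sum_mul_eq {ι : Type*} [Fintype ι] [DecidableEq ι] (w : ι → ℝ)
    {S₁ S₀ : Finset ι} (hS : Disjoint S₁ S₀) {β : ℝ} (h₁ : ∑ i ∈ S₁, w i ≤ β)
    (h₀ : β ≤ ∑ i ∈ S₀ᶜ, w i) :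
    ∃ x : ι → ℝ, (∀ i, x i ∈ Set.Icc 0 1) ∧ (∀ i ∈ S₁, x i = 1) ∧ (∀ i ∈ S₀, x i = 0) ∧
      ∑ i, w i * x i = β := by
  set x : ℝ → ι → ℝ := fun t i => if i ∈ S₀ then 0 else if i ∈ S₁ then 1 else t
  have hcont : Continuous fun t => ∑ i, w i * x t i := by
    refine continuous_finsetSum _ fun i _ => continuous_const.mul ?_
    simp only [x]
    split_ifs <;> fun_prop
  have hx₀ : ∑ i, w i * x 0 i = ∑ i ∈ S₁, w i := by
    have hx : ∀ i, x 0 i = if i ∈ S₁ then 1 else 0 := fun i => by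
      by_cases hi : i ∈ S₁ <;> simp [x, hi, disjoint_left.mp hS]
    simp [hx]
  have hx₁ : ∑ i, w i * x 1 i = ∑ i ∈ S₀ᶜ, w i := by
    simp [x, sum_ite, compl_eq_univ_sdiff, filter_not]
  obtain ⟨t, ht, hβ⟩ := intermediate_value_Icc zero_le_one hcont.continuousOn
    ⟨hx₀ ▸ h₁, hx₁ ▸ h₀⟩
  refine ⟨x t, fun i => ?_, fun i hi => ?_, fun i hi => ?_, hβ⟩
  · simp only [x]
    split_ifs <;> simp [ht.1, ht.2]
  · simp [x, hi, disjoint_left.mp hS hi]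
  · simp [x, hi]

theorem card_filter_mem_le_length {α β : Type*} [Fintype α] [DecidableEq α] [DecidableEq β]
    (σ : List (α × β)) (b : β) : #{j | (j, b) ∈ σ} ≤ σ.length := by
  calc #{j | (j, b) ∈ σ} ≤ #(σ.map Prod.fst).toFinset :=
        card_le_card fun j hj => List.mem_toFinset.mpr (List.mem_map_of_mem (f := Prod.fst)
          (mem_filter.mp hj).2)
    _ ≤ σ.length := (List.toFinset_card_le _).trans (List.length_map _).le

theorem lpFeasibleAt_of_length_mul_le {n M : ℕ} {a : Fin n → ℕ} {β : ℤ} (ha : ∀ j, a j ≤ M)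
    {σ : List (Fin n × Bool)} (hσ : (σ.map Prod.fst).Nodup) (h₁ : (σ.length * M : ℝ) ≤ β)
    (h₀ : (β : ℝ) ≤ ∑ j, (a j : ℝ) - σ.length * M) :
    LPFeasibleAt n a β σ := by
  set S : Bool → Finset (Fin n) := fun b => {j | (j, b) ∈ σ}
  have hdisj : Disjoint (S true) (S false) := by
    refine disjoint_left.mpr fun j h₁ h₀ => ?_
    have := List.inj_on_of_nodup_map hσ (mem_filter.mp h₁).2 (mem_filter.mp h₀).2 rfl
    simp at this
  have hsum : ∀ b, ∑ j ∈ S b, (a j : ℝ) ≤ σ.length * M := fun b =>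
    calc ∑ j ∈ S b, (a j : ℝ) ≤ #(S b) • (M : ℝ) :=
          sum_le_card_nsmul _ _ _ fun j _ => by exact_mod_cast ha j
      _ ≤ σ.length * M := by
          rw [nsmul_eq_mul]
          gcongr
          exact_mod_cast card_filter_mem_le_length σ b
  have hcompl : ∑ j ∈ (S false)ᶜ, (a j : ℝ) = ∑ j, (a j : ℝ) - ∑ j ∈ S false, (a j : ℝ) := by
    rw [eq_sub_iff_add_eq, sum_compl_add_sum]
  obtain ⟨x, hx, hx₁, hx₀, hxβ⟩ := exists_mem_Icc_sum_mul_eq (fun j => (a j : ℝ)) hdisj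
    ((hsum true).trans h₁) (by linarith [hsum false])
  refine ⟨x, fun j => hx j, fun ⟨j, b⟩ hjb => ?_, hxβ⟩
  cases b
  · exact hx₀ j (mem_filter.mpr ⟨mem_univ j, hjb⟩)
  · exact hx₁ j (mem_filter.mpr ⟨mem_univ j, hjb⟩)

theorem List.eq_of_append_singleton_prefix {α : Type*} {l t : List α} {x y : α}
    (hx : l ++ [x] <+: t) (hy : l ++ [y] <+: t) : x = y := by
  simpa using (List.prefix_of_prefix_length_le hx hy (by simp)).eq_of_length (by simp)

theorem IsBBTree.two_pow_le_ncard {n d : ℕ} {a : Fin n → ℕ} {β : ℤ}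
    {T : Set (List (Fin n × Bool))} (hT : IsBBTree n a β T) (hdn : d ≤ n)
    (hfeas : ∀ σ : List (Fin n × Bool), (σ.map Prod.fst).Nodup → σ.length < d →
      LPFeasibleAt n a β σ) :
    2 ^ d ≤ T.ncard := by
  obtain ⟨hfin, hroot, hbranch, hleaf⟩ := hT
  set subtree : List (Fin n × Bool) → Set (List (Fin n × Bool)) := fun σ => {τ ∈ T | σ <+: τ}
  have hsubfin : ∀ σ, (subtree σ).Finite := fun σ => hfin.subset (Set.sep_subset _ _)
  have key : ∀ k σ, σ ∈ T → (σ.map Prod.fst).Nodup → σ.length + k ≤ d →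
      2 ^ k ≤ (subtree σ).ncard := by
    intro k
    induction k with
    | zero =>
      intro σ hσT _ _
      exact (Set.ncard_pos (hsubfin σ)).mpr ⟨σ, hσT, List.prefix_refl σ⟩
    | succ k ih =>
      intro σ hσT hσ hlen
      have hinner : ∃ j b, σ ++ [(j, b)] ∈ T := by
        by_contra! hleaf'
        rcases hleaf σ hσT hleaf' with h | h
        · exact h (hfeas σ hσ (by omega))
        · omega
      obtain ⟨j, hj, hT₀, hT₁, -⟩ := hbranch σ hσT hinner
      have hchild : ∀ b, ((σ ++ [(j, b)]).map Prod.fst).Nodup := fun b => by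
        rw [List.map_append, List.nodup_append]
        refine ⟨hσ, List.nodup_singleton _, fun i hi k hk hik => hj ?_⟩
        rw [List.map_singleton, List.mem_singleton] at hk
        rwa [hik, hk] at hi
      have hdisj : Disjoint (subtree (σ ++ [(j, false)])) (subtree (σ ++ [(j, true)])) :=
        Set.disjoint_left.mpr fun τ h₀ h₁ => by
          simpa using List.eq_of_append_singleton_prefix h₀.2 h₁.2
      have hsub : subtree (σ ++ [(j, false)]) ∪ subtree (σ ++ [(j, true)]) ⊆ subtree σ := by
        rintro τ (⟨hτ, hpre⟩ | ⟨hτ, hpre⟩) <;>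
          exact ⟨hτ, (List.prefix_append σ _).trans hpre⟩
      calc 2 ^ (k + 1) = 2 ^ k + 2 ^ k := by ring
        _ ≤ (subtree (σ ++ [(j, false)])).ncard + (subtree (σ ++ [(j, true)])).ncard :=
          add_le_add (ih _ hT₀ (hchild false) (by simp; omega))
            (ih _ hT₁ (hchild true) (by simp; omega))
        _ = (subtree (σ ++ [(j, false)]) ∪ subtree (σ ++ [(j, true)])).ncard :=
          (Set.ncard_union_eq hdisj (hsubfin _) (hsubfin _)).symm
        _ ≤ (subtree σ).ncard := Set.ncard_le_ncard hsub (hsubfin σ)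
  calc 2 ^ d ≤ (subtree []).ncard := key d [] hroot List.nodup_nil (by simp)
    _ ≤ T.ncard := Set.ncard_le_ncard (Set.sep_subset _ _) hfin

theorem mul_le_sixteen_mul_sum_of_card_lt {n M : ℕ} {a : Fin n → ℕ} (ha : ∀ j, 1 ≤ a j)
    (hsmall : #{j | a j ∈ Icc 1 (M / 8)} < (n + 1) / 2) :
    n * M ≤ 16 * ∑ j, a j := by
  set L : Finset (Fin n) := ({j | a j ∈ Icc 1 (M / 8)} : Finset (Fin n))ᶜ
  have hL : n / 2 + 1 ≤ #L := by
    rw [card_compl, Fintype.card_fin]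
    omega
  have hlarge : ∀ j ∈ L, M / 8 + 1 ≤ a j := fun j hj => by
    have := hj
    simp only [L, mem_compl, mem_filter, mem_univ, true_and, mem_Icc] at this
    have := ha j
    omega
  calc n * M ≤ 2 * (n / 2 + 1) * (8 * (M / 8 + 1)) := Nat.mul_le_mul (by omega) (by omega)
    _ = 16 * ((n / 2 + 1) * (M / 8 + 1)) := by ring
    _ ≤ 16 * (#L * (M / 8 + 1)) := by gcongr
    _ ≤ 16 * ∑ j ∈ L, a j := by
      gcongr
      simpa using card_nsmul_le_sum L a _ hlarge
    _ ≤ 16 * ∑ j, a j := by gcongr; exact subset_univ L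

theorem allBBTreesHaveTwoPowNodes_of_le_sum {r N : ℝ} {n M d : ℕ} {a : Fin n → ℕ} (hM : 1 ≤ M)
    (ha : ∀ j, a j ≤ M) (hdn : d ≤ n) (hN : N ≤ d)
    (hsum : ((d : ℝ) + 1) * M ≤ min r (1 - r) * ∑ j, (a j : ℝ)) :
    AllBBTreesHaveTwoPowNodes n r N a := by
  intro T hT
  set S := ∑ j, (a j : ℝ)
  have hS : 0 ≤ S := by positivity
  have hM' : (1 : ℝ) ≤ M := by exact_mod_cast hM
  have hminS : min r (1 - r) * S ≤ r * S ∧ min r (1 - r) * S ≤ (1 - r) * S :=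
    ⟨mul_le_mul_of_nonneg_right (min_le_left _ _) hS,
      mul_le_mul_of_nonneg_right (min_le_right _ _) hS⟩
  have hlow : (d * M : ℝ) ≤ ⌊r * S⌋ := by linarith [Int.sub_one_lt_floor (r * S)]
  have hhigh : (⌊r * S⌋ : ℝ) ≤ S - d * M := by linarith [Int.floor_le (r * S)]
  have hfeas : ∀ σ : List (Fin n × Bool), (σ.map Prod.fst).Nodup → σ.length < d →
      LPFeasibleAt n a ⌊r * S⌋ σ := fun σ hσ hlen => by
    have : (σ.length * M : ℝ) ≤ d * M := by gcongr
    exact lpFeasibleAt_of_length_mul_le ha hσ (by linarith) (by linarith)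
  calc (2 : ℝ) ^ N ≤ 2 ^ (d : ℝ) := Real.rpow_le_rpow_of_exponent_le one_le_two hN
    _ = 2 ^ d := Real.rpow_natCast 2 d
    _ ≤ T.ncard := by exact_mod_cast hT.two_pow_le_ncard hdn hfeas

theorem card_filter_many_small_mul_two_pow_le (n M : ℕ) :
    #{a ∈ Fintype.piFinset (fun _ : Fin n => Icc 1 M) | (n + 1) / 2 ≤ #{j | a j ∈ Icc 1 (M / 8)}}
      * 2 ^ ((n + 1) / 2) ≤ M ^ n := by
  set k := (n + 1) / 2
  have hcount := card_piFinset_filter_many_mem_le (ι := Fin n) (Icc 1 M) (Icc 1 (M / 8)) k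
  simp only [Nat.card_Icc, add_tsub_cancel_right, Fintype.card_fin] at hcount
  have hchoose : n.choose k ≤ 4 ^ k := (Nat.choose_le_two_pow n k).trans <| by
    rw [show 4 = 2 ^ 2 by rfl, ← pow_mul]
    exact Nat.pow_le_pow_right two_pos (by omega)
  have h8 : 8 * (M / 8) ≤ M := Nat.mul_div_le M 8
  refine Nat.le_of_mul_le_mul_right (c := 4 ^ k) ?_ (by positivity)
  calc _ = #{a ∈ Fintype.piFinset (fun _ : Fin n => Icc 1 M) |
          k ≤ #{j | a j ∈ Icc 1 (M / 8)}} * 8 ^ k := by rw [mul_assoc, ← mul_pow]; norm_num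
    _ ≤ n.choose k * (M / 8) ^ k * M ^ (n - k) * 8 ^ k := by gcongr
    _ = n.choose k * (8 * (M / 8)) ^ k * M ^ (n - k) := by ring
    _ ≤ 4 ^ k * M ^ k * M ^ (n - k) := by gcongr
    _ = M ^ n * 4 ^ k := by rw [mul_assoc, ← pow_add, Nat.add_sub_cancel' (by omega), mul_comm]

theorem ncard_setOf_mem_box {n M : ℕ} (P : (Fin n → ℕ) → Prop) [DecidablePred P] :
    {a : Fin n → ℕ | (∀ j, 1 ≤ a j ∧ a j ≤ M) ∧ P a}.ncard =
      #{a ∈ Fintype.piFinset (fun _ : Fin n => Icc 1 M) | P a} := by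
  rw [← Set.ncard_coe_finset]
  congr 1
  ext a
  simp [Fintype.mem_piFinset]

theorem ncard_setOf_mem_box_div_le_one {n M : ℕ} (P : (Fin n → ℕ) → Prop) :
    ({a : Fin n → ℕ | (∀ j, 1 ≤ a j ∧ a j ≤ M) ∧ P a}.ncard : ℝ) / M ^ n ≤ 1 := by
  classical
  refine div_le_one_of_le₀ ?_ (by positivity)
  rw [ncard_setOf_mem_box]
  exact_mod_cast (card_filter_le _ _).trans (by simp)

theorem allBBTreesHaveTwoPowNodes_of_card_lt {r N : ℝ} {n M d : ℕ} {a : Fin n → ℕ}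
    (hr0 : 0 < r) (hr1 : r < 1) (hM : 1 ≤ M) (ha : ∀ j, 1 ≤ a j ∧ a j ≤ M)
    (hfew : #{j | a j ∈ Icc 1 (M / 8)} < (n + 1) / 2) (hN : N ≤ d)
    (hd : (d : ℝ) + 1 ≤ min r (1 - r) / 16 * n) :
    AllBBTreesHaveTwoPowNodes n r N a := by
  have hmin : 0 < min r (1 - r) ∧ min r (1 - r) < 1 :=
    ⟨lt_min hr0 (by linarith), (min_le_left _ _).trans_lt hr1⟩
  have hsum : ((n * M : ℕ) : ℝ) ≤ ((16 * ∑ j, a j : ℕ) : ℝ) := by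
    exact_mod_cast mul_le_sixteen_mul_sum_of_card_lt (fun j => (ha j).1) hfew
  push_cast at hsum
  have hM' : (0 : ℝ) ≤ M := by positivity
  refine allBBTreesHaveTwoPowNodes_of_le_sum hM (fun j => (ha j).2) ?_ hN (by nlinarith)
  have : (d : ℝ) < n := by nlinarith
  exact_mod_cast this.le

theorem one_sub_half_pow_le_ncard_div {r N : ℝ} {n M d : ℕ} (hr0 : 0 < r) (hr1 : r < 1)
    (hM : 1 ≤ M) (hN : N ≤ d) (hd : (d : ℝ) + 1 ≤ min r (1 - r) / 16 * n) :
    1 - (1 / 2 : ℝ) ^ ((n + 1) / 2) ≤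
      ({a : Fin n → ℕ | (∀ j, 1 ≤ a j ∧ a j ≤ M) ∧ AllBBTreesHaveTwoPowNodes n r N a}.ncard : ℝ) /
        M ^ n := by
  classical
  set box := Fintype.piFinset fun _ : Fin n => Icc 1 M
  set k := (n + 1) / 2
  set Hard := AllBBTreesHaveTwoPowNodes n r N
  set Many : (Fin n → ℕ) → Prop := fun a => k ≤ #{j | a j ∈ Icc 1 (M / 8)}
  have hgood : {a ∈ box | ¬ Many a} ⊆ {a ∈ box | Hard a} := fun a ha => by
    obtain ⟨hbox, hfew⟩ := mem_filter.mp ha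
    exact mem_filter.mpr ⟨hbox, allBBTreesHaveTwoPowNodes_of_card_lt hr0 hr1 hM
      (fun j => mem_Icc.mp (Fintype.mem_piFinset.mp hbox j)) (not_le.mp hfew) hN hd⟩
  have hbox : #box = M ^ n := by simp [box]
  have hcount : M ^ n ≤ #{a ∈ box | Hard a} + #{a ∈ box | Many a} := by
    rw [← hbox, ← card_filter_add_card_filter_not (s := box) Many, add_comm]
    exact Nat.add_le_add_right (card_le_card hgood) _
  have hmany : (#{a ∈ box | Many a} : ℝ) ≤ (1 / 2) ^ k * M ^ n := by
    calc (#{a ∈ box | Many a} : ℝ) = (1 / 2) ^ k * (#{a ∈ box | Many a} * 2 ^ k) := by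
          rw [mul_comm, mul_assoc, ← mul_pow]; norm_num
      _ ≤ (1 / 2) ^ k * M ^ n := by
          gcongr; exact_mod_cast card_filter_many_small_mul_two_pow_le n M
  have hcount' : (M ^ n : ℝ) ≤ #{a ∈ box | Hard a} + #{a ∈ box | Many a} := by
    exact_mod_cast hcount
  rw [le_div_iff₀ (by positivity), ncard_setOf_mem_box]
  linarith

theorem eventually_ceil_rpow_add_one_le {ε c : ℝ} (hε : 0 < ε) (hc : 0 < c) :
    ∀ᶠ n : ℕ in atTop, (⌈(n : ℝ) ^ (1 - ε)⌉₊ : ℝ) + 1 ≤ c * n := by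
  have hsmall : ∀ᶠ n : ℕ in atTop, (n : ℝ) ^ (-ε) < c / 2 :=
    ((tendsto_rpow_neg_atTop hε).comp tendsto_natCast_atTop_atTop).eventually_lt_const
      (half_pos hc)
  have hlarge : ∀ᶠ n : ℕ in atTop, 2 ≤ c / 2 * n :=
    (tendsto_natCast_atTop_atTop.const_mul_atTop (half_pos hc)).eventually_ge_atTop 2
  filter_upwards [hsmall, hlarge, eventually_gt_atTop 0] with n hsmall hlarge hn
  have hn' : (0 : ℝ) < n := by exact_mod_cast hn
  have hceil := Nat.ceil_lt_add_one (Real.rpow_nonneg hn'.le (1 - ε))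
  have hrpow : (n : ℝ) ^ (1 - ε) ≤ n * (c / 2) := by
    rw [sub_eq_add_neg, Real.rpow_add hn', Real.rpow_one]
    exact mul_le_mul_of_nonneg_left hsmall.le hn'.le
  linarith

theorem stmt_16_general (r ε : ℝ) (hr0 : 0 < r) (hr1 : r < 1) (hε0 : 0 < ε) :
    Tendsto (fun n : ℕ =>
        ((Set.ncard {a : Fin n → ℕ |
            (∀ j, 1 ≤ a j ∧ a j ≤ ⌊(10 : ℝ) ^ ((n : ℝ) / 2)⌋₊) ∧
            ∀ T : Set (List (Fin n × Bool)),
              IsBBTree n a ⌊r * ∑ j, (a j : ℝ)⌋ T →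
                (2 : ℝ) ^ ((n : ℝ) ^ ((1 : ℝ) - ε)) ≤ (Set.ncard T : ℝ)} : ℝ)
          / (⌊(10 : ℝ) ^ ((n : ℝ) / 2)⌋₊ : ℝ) ^ n))
      atTop (nhds 1) := by
  have hM : ∀ n : ℕ, 1 ≤ ⌊(10 : ℝ) ^ ((n : ℝ) / 2)⌋₊ := fun n =>
    (Nat.one_le_floor_iff _).mpr (Real.one_le_rpow (by norm_num) (by positivity))
  have hhalf : Tendsto (fun n : ℕ => 1 - (1 / 2 : ℝ) ^ ((n + 1) / 2)) atTop (nhds 1) := by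
    have hk : Tendsto (fun n : ℕ => (n + 1) / 2) atTop atTop :=
      tendsto_atTop_atTop.mpr fun b => ⟨2 * b, fun n hn => by omega⟩
    simpa using ((tendsto_pow_atTop_nhds_zero_of_lt_one (r := (1 / 2 : ℝ)) (by norm_num)
      (by norm_num)).comp hk).const_sub 1
  have hc : 0 < min r (1 - r) / 16 := div_pos (lt_min hr0 (sub_pos.mpr hr1)) (by norm_num)
  refine tendsto_of_tendsto_of_tendsto_of_le_of_le' hhalf tendsto_const_nhds ?_
    (Eventually.of_forall fun n => ncard_setOf_mem_box_div_le_one _)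
  filter_upwards [eventually_ceil_rpow_add_one_le hε0 hc] with n hn
  exact one_sub_half_pow_le_ncard_div hr0 hr1 (hM n) (Nat.le_ceil _) hn

/-- Main theorem: with `M = ⌊10^(n/2)⌋`, `a₁,…,aₙ` i.i.d. uniform on `{1,…,M}` and
`β = ⌊r ∑ aⱼ⌋`, the probability that every branch-and-bound tree for the instance has at
least `2^(n^(1-ε))` nodes tends to 1 as `n → ∞`. -/
theorem stmt_16 (r ε : ℝ) (hr0 : 0 < r) (hr1 : r < 1) (hε0 : 0 < ε) (hε1 : ε < 1) :
    Tendsto (fun n : ℕ =>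
        ((Set.ncard {a : Fin n → ℕ |
            (∀ j, 1 ≤ a j ∧ a j ≤ ⌊(10 : ℝ) ^ ((n : ℝ) / 2)⌋₊) ∧
            ∀ T : Set (List (Fin n × Bool)),
              IsBBTree n a ⌊r * ∑ j, (a j : ℝ)⌋ T →
                (2 : ℝ) ^ ((n : ℝ) ^ ((1 : ℝ) - ε)) ≤ (Set.ncard T : ℝ)} : ℝ)
          / (⌊(10 : ℝ) ^ ((n : ℝ) / 2)⌋₊ : ℝ) ^ n))
      atTop (nhds 1) :=
  stmt_16_general r ε hr0 hr1 hε0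
end
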